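/- arXiv:2501.09208 — 4 statements merged into one kernel-verified Lean document; each statement's English description precedes it below -/
import Mathlib

section
/- Set-valued standard tableaux of shape (e+t,e)/(f,0) with c+e-f+t entries in the first row and d+e entries in the second row are in bijection with two-coloured Motzkin paths from (0,f) to (n,t) with c umber horizontal steps, d denim horizontal steps, e-f+t up-steps, and e down-steps (so n = c+d+2e-f+t steps in total), where an umber horizontal step occurs neither before the first up-step nor at height 0, and a denim horizontal step does not occur before the first down-step. -/
/-- Steps of a two-coloured Motzkin path. -/
inductive MStep : Type
  | up : MStep
  | down : MStep
  | hu : MStep   -- umber horizontal step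
  | hd : MStep   -- denim horizontal step
  deriving DecidableEq

/-- The height change of a step. -/
def MStep.val : MStep → ℤ
  | .up => 1
  | .down => -1
  | .hu => 0
  | .hd => 0

/-- The ending height of a path starting at height `h0`. -/
def endHeight (h0 : ℤ) (l : List MStep) : ℤ := h0 + (l.map MStep.val).sum

/-- A list of steps is a (two-coloured) Motzkin path starting at height `h0` if it
never runs below the x-axis. -/
def IsMotzkin (h0 : ℤ) (l : List MStep) : Prop :=
  ∀ p : List MStep, p <+: l → 0 ≤ endHeight h0 p

/-- The cells of the two-rowed skew shape `(e+t,e)/(f,0)`, rows indexed by `0` (first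
row) and `1` (second row), columns `1`-indexed: the first row has cells in columns
`f+1,…,e+t`, the second row in columns `1,…,e`. -/
def InShape (e t f : ℕ) (p : ℕ × ℕ) : Prop :=
  (p.1 = 0 ∧ f + 1 ≤ p.2 ∧ p.2 ≤ e + t) ∨ (p.1 = 1 ∧ 1 ≤ p.2 ∧ p.2 ≤ e)

/-- `T` is a set-valued standard tableau of shape `(e+t,e)/(f,0)` with entries
`1,…,n`: each cell of the shape gets a nonempty set, the sets partition `{1,…,n}`,
and every number in a cell is less than all numbers in cells weakly to the right and
weakly below (the cell itself excluded). -/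
def IsSVT (n e t f : ℕ) (T : ℕ × ℕ → Finset ℕ) : Prop :=
  (∀ p, ¬ InShape e t f p → T p = ∅) ∧
  (∀ p, InShape e t f p → (T p).Nonempty) ∧
  (∀ p, ∀ k ∈ T p, k ∈ Finset.Icc 1 n) ∧
  (∀ k ∈ Finset.Icc 1 n, ∃! p : ℕ × ℕ, k ∈ T p) ∧
  (∀ p q : ℕ × ℕ, InShape e t f p → InShape e t f q → p ≠ q → p.1 ≤ q.1 → p.2 ≤ q.2 →
    ∀ a ∈ T p, ∀ b ∈ T q, a < b)

/-- The number of entries of `T` in row `r`, for a two-rowed tableau with at most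
`m` columns. -/
def rowEntries (m r : ℕ) (T : ℕ × ℕ → Finset ℕ) : ℕ :=
  ∑ j ∈ Finset.range (m + 1), (T (r, j)).card

/-!
Read entry `k` of a tableau as the `k`-th step of a path: an entry of the first (second) row is
an up (down) step if it is the smallest entry of its cell and an umber (denim) step otherwise.
Conversely the `k`-th step of a path puts `k` into the first row for up and umber steps and into
the second row for down and denim steps, in the column given by the number of up (down) steps
taken so far, shifted by `f` in the first row.

For a word with `e+t-f` up and `e` down steps this filling is a standard set-valued tableau
exactly when the word is a Motzkin path with the colour conditions. Rows are automatically
increasing; the column condition between `(0, j)` and `(1, j)` says that the `j`-th down step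
cannot precede the `(j-f)`-th up step, which is the Motzkin condition, and an umber step at
height `0` would be an entry of `(0, j)` after the first entry of `(1, j)`. A horizontal step
before the first up (down) step would land in column `f` (`0`), outside the shape. Thus both
constructions land in the right sets, and they are mutually inverse because a cell's smallest
entry is the step that opened it.
-/

open Finset

namespace List

variable {α : Type*}

theorem take_eq_take_sub_one_append_getD (l : List α) (d : α) {k : ℕ} (h₁ : 1 ≤ k)
    (h₂ : k ≤ l.length) : l.take k = l.take (k - 1) ++ [l.getD (k - 1) d] := by
  obtain ⟨i, rfl⟩ : ∃ i, k = i + 1 := ⟨k - 1, by omega⟩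
  rw [List.take_add_one, Nat.add_sub_cancel, List.getElem?_eq_getElem (by omega),
    List.getD_eq_getElem _ _ (by omega), Option.toList_some]

theorem take_sub_one_append_getD_prefix (l : List α) (d : α) {k : ℕ} (h₁ : 1 ≤ k)
    (h₂ : k ≤ l.length) : l.take (k - 1) ++ [l.getD (k - 1) d] <+: l :=
  take_eq_take_sub_one_append_getD l d h₁ h₂ ▸ l.take_prefix k

theorem prefix_append_singleton_iff {l p : List α} {a : α} (d : α) :
    p ++ [a] <+: l ↔ p.length < l.length ∧ p = l.take p.length ∧ l.getD p.length d = a := by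
  constructor
  · intro h
    have hlt : p.length < l.length := by simpa using h.length_le
    have htake := List.prefix_iff_eq_take.mp h
    rw [List.length_append, List.length_singleton,
      take_eq_take_sub_one_append_getD l d (by omega) (by omega), Nat.add_sub_cancel] at htake
    exact ⟨hlt, List.append_inj_left' htake rfl,
      by simpa using (List.append_inj_right' htake rfl).symm⟩
  · rintro ⟨hlt, hp, rfl⟩
    have := l.take_sub_one_append_getD_prefix d (k := p.length + 1) (by omega) (by omega)
    rwa [Nat.add_sub_cancel, ← hp] at this

theorem card_filter_Icc_getD (l : List α) (d : α) (P : α → Prop) [DecidablePred P] {k : ℕ}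
    (hk : k ≤ l.length) : #{i ∈ Icc 1 k | P (l.getD (i - 1) d)} = (l.take k).countP (P ·) := by
  induction k with
  | zero => simp
  | succ k ih =>
    rw [← Finset.insert_Icc_right_eq_Icc_add_one (by omega), Finset.filter_insert,
      take_eq_take_sub_one_append_getD l d (by omega) hk, List.countP_append, Nat.add_sub_cancel,
      ← ih (by omega)]
    split_ifs with h <;> simp [h, Finset.card_insert_of_notMem, -List.getD_eq_getElem?_getD]

variable [DecidableEq α]

theorem count_take_mono (l : List α) (a : α) : Monotone fun k => (l.take k).count a :=
  fun _ _ h => (List.take_prefix_take_left h).count_le a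

theorem count_take_eq_count_take_sub_one_add (l : List α) (d a : α) {k : ℕ} (h₁ : 1 ≤ k)
    (h₂ : k ≤ l.length) :
    (l.take k).count a = (l.take (k - 1)).count a + if l.getD (k - 1) d = a then 1 else 0 := by
  rw [take_eq_take_sub_one_append_getD l d h₁ h₂, List.count_append, List.count_singleton]
  simp [beq_iff_eq]

theorem exists_take_count_eq (l : List α) (d a : α) {m k : ℕ} (hm : 1 ≤ m)
    (hk : m ≤ (l.take k).count a) :
    ∃ i, 1 ≤ i ∧ i ≤ k ∧ i ≤ l.length ∧ l.getD (i - 1) d = a ∧ (l.take i).count a = m := by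
  classical
  have hex : ∃ i, m ≤ (l.take i).count a := ⟨k, hk⟩
  set i := Nat.find hex
  have hi : m ≤ (l.take i).count a := Nat.find_spec hex
  have hik : i ≤ k := Nat.find_min' hex hk
  have hi₁ : 1 ≤ i := Nat.one_le_iff_ne_zero.mpr fun h => by simp [h] at hi; omega
  have hprev : (l.take (i - 1)).count a < m := Nat.lt_of_not_le (Nat.find_min hex (by omega))
  have hlen : i ≤ l.length := by
    by_contra h
    have h₁ : l.take (i - 1) = l := List.take_of_length_le (by omega)
    have h₂ : l.take i = l := List.take_of_length_le (by omega)
    rw [h₁] at hprev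
    rw [h₂] at hi
    omega
  have hstep := count_take_eq_count_take_sub_one_add l d a hi₁ hlen
  refine ⟨i, hi₁, hik, hlen, ?_, ?_⟩ <;> split_ifs at hstep <;> omega

theorem card_filter_Icc_getD_eq (l : List α) (d a : α) {k : ℕ} (hk : k ≤ l.length) :
    #{i ∈ Icc 1 k | l.getD (i - 1) d = a} = (l.take k).count a := by
  rw [card_filter_Icc_getD l d (· = a) hk, List.count_eq_countP]
  congr

end List

namespace MStep

def row : MStep → ℕ
  | up | hu => 0
  | down | hd => 1

theorem row_le_one (s : MStep) : s.row ≤ 1 := by cases s <;> simp [row]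

end MStep

theorem endHeight_eq (h0 : ℤ) (l : List MStep) :
    endHeight h0 l = h0 + l.count .up - l.count .down := by
  induction l generalizing h0 with
  | nil => simp [endHeight]
  | cons s l ih =>
    have : endHeight h0 (s :: l) = endHeight (h0 + s.val) l := by
      simp only [endHeight, List.map_cons, List.sum_cons]; ring
    rw [this, ih]
    cases s <;> simp [MStep.val] <;> ring

theorem countP_row_eq_zero (l : List MStep) :
    l.countP (fun s => s.row = 0) = l.count .up + l.count .hu := by
  induction l with
  | nil => rfl
  | cons s l ih =>
    rw [List.countP_cons, List.count_cons, List.count_cons, ih]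
    cases s <;> simp [MStep.row] <;> omega

theorem countP_row_eq_one (l : List MStep) :
    l.countP (fun s => s.row = 1) = l.count .down + l.count .hd := by
  induction l with
  | nil => rfl
  | cons s l ih =>
    rw [List.countP_cons, List.count_cons, List.count_cons, ih]
    cases s <;> simp [MStep.row] <;> omega

def UmberAdmissible (f : ℕ) (l : List MStep) : Prop :=
  ∀ p : List MStep, p ++ [MStep.hu] <+: l → (MStep.up ∈ p ∧ endHeight (f : ℤ) p ≠ 0)

def DenimAdmissible (l : List MStep) : Prop :=
  ∀ p : List MStep, p ++ [MStep.hd] <+: l → MStep.down ∈ p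

instance (e t f : ℕ) : DecidablePred (InShape e t f) := fun _ => by
  unfold InShape; infer_instance

theorem IsSVT.inShape_of_mem {n e t f : ℕ} {T : ℕ × ℕ → Finset ℕ} (hT : IsSVT n e t f T)
    {p : ℕ × ℕ} {k : ℕ} (hk : k ∈ T p) : InShape e t f p := by
  by_contra hp
  simp [hT.1 p hp] at hk

theorem IsSVT.lt {n e t f : ℕ} {T : ℕ × ℕ → Finset ℕ} (hT : IsSVT n e t f T)
    {p q : ℕ × ℕ} {a b : ℕ} (ha : a ∈ T p) (hb : b ∈ T q) (hpq : p ≠ q) (h₁ : p.1 ≤ q.1)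
    (h₂ : p.2 ≤ q.2) : a < b :=
  hT.2.2.2.2 p q (hT.inShape_of_mem ha) (hT.inShape_of_mem hb) hpq h₁ h₂ a ha b hb

/-- Entries are `1, …, n`, so entry `k` is the step `l[k - 1]`; the default `.up` is never
read for `k` in that range. -/
def cellOf (f : ℕ) (l : List MStep) (k : ℕ) : ℕ × ℕ :=
  match l.getD (k - 1) .up with
  | .up | .hu => (0, f + (l.take k).count .up)
  | .down | .hd => (1, (l.take k).count .down)

def tableauOfPath (n f : ℕ) (l : List MStep) (p : ℕ × ℕ) : Finset ℕ :=
  {k ∈ Icc 1 n | cellOf f l k = p}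

section PathToTableau

variable {n e t f : ℕ} {l : List MStep}

theorem mem_tableauOfPath {k : ℕ} {p : ℕ × ℕ} :
    k ∈ tableauOfPath n f l p ↔ k ∈ Icc 1 n ∧ cellOf f l k = p :=
  Finset.mem_filter

theorem cellOf_fst (f : ℕ) (l : List MStep) (k : ℕ) :
    (cellOf f l k).1 = (l.getD (k - 1) .up).row := by
  unfold cellOf; split <;> simp_all [MStep.row]

theorem cellOf_of_row_eq_zero {k : ℕ} (h : (l.getD (k - 1) .up).row = 0) :
    cellOf f l k = (0, f + (l.take k).count .up) := by
  unfold cellOf; split <;> simp_all [MStep.row]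

theorem cellOf_of_row_eq_one {k : ℕ} (h : (l.getD (k - 1) .up).row = 1) :
    cellOf f l k = (1, (l.take k).count .down) := by
  unfold cellOf; split <;> simp_all [MStep.row]

theorem cellOf_snd_le_of_le {a b : ℕ} (hab : a ≤ b) (hrow : (cellOf f l a).1 = (cellOf f l b).1) :
    (cellOf f l a).2 ≤ (cellOf f l b).2 := by
  rw [cellOf_fst, cellOf_fst] at hrow
  rcases Nat.le_one_iff_eq_zero_or_eq_one.mp (l.getD (a - 1) .up).row_le_one with ha | ha
  · rw [cellOf_of_row_eq_zero ha, cellOf_of_row_eq_zero (hrow ▸ ha)]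
    exact Nat.add_le_add_left (l.count_take_mono _ hab) f
  · rw [cellOf_of_row_eq_one ha, cellOf_of_row_eq_one (hrow ▸ ha)]
    exact l.count_take_mono _ hab

theorem exists_cellOf_eq_zero {m k : ℕ} (hm : 1 ≤ m) (hk : m ≤ (l.take k).count .up) :
    ∃ i, 1 ≤ i ∧ i ≤ k ∧ i ≤ l.length ∧ (l.take i).count .up = m ∧ cellOf f l i = (0, f + m) := by
  obtain ⟨i, hi₁, hik, hil, hstep, hcount⟩ := l.exists_take_count_eq .up .up hm hk
  refine ⟨i, hi₁, hik, hil, hcount, ?_⟩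
  rw [cellOf_of_row_eq_zero (by rw [hstep]; rfl), hcount]

theorem exists_cellOf_eq_one {m k : ℕ} (hm : 1 ≤ m) (hk : m ≤ (l.take k).count .down) :
    ∃ i, 1 ≤ i ∧ i ≤ k ∧ i ≤ l.length ∧ cellOf f l i = (1, m) := by
  obtain ⟨i, hi₁, hik, hil, hstep, hcount⟩ := l.exists_take_count_eq .up .down hm hk
  refine ⟨i, hi₁, hik, hil, ?_⟩
  rw [cellOf_of_row_eq_one (by rw [hstep]; rfl), hcount]

theorem cellOf_inShape (hup : l.count .up = e + t - f) (hdn : l.count .down = e)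
    (humber : UmberAdmissible f l) (hdenim : DenimAdmissible l) {k : ℕ} (h₁ : 1 ≤ k)
    (h₂ : k ≤ l.length) : InShape e t f (cellOf f l k) := by
  have hpre := l.take_sub_one_append_getD_prefix .up h₁ h₂
  have hU := l.count_take_eq_count_take_sub_one_add .up .up h₁ h₂
  have hD := l.count_take_eq_count_take_sub_one_add .up .down h₁ h₂
  have hUle : (l.take k).count .up ≤ e + t - f := hup ▸ (l.take_prefix k).count_le _
  have hDle : (l.take k).count .down ≤ e := hdn ▸ (l.take_prefix k).count_le _
  unfold InShape
  cases hs : l.getD (k - 1) .up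
  · rw [cellOf_of_row_eq_zero (by rw [hs]; rfl)]
    simp only [hs, if_true] at hU
    omega
  · rw [cellOf_of_row_eq_one (by rw [hs]; rfl)]
    simp only [hs, if_true] at hD
    omega
  · rw [hs] at hpre
    have hpos := List.count_pos_iff.mpr (humber _ hpre).1
    rw [cellOf_of_row_eq_zero (by rw [hs]; rfl)]
    omega
  · rw [hs] at hpre
    have hpos := List.count_pos_iff.mpr (hdenim _ hpre)
    rw [cellOf_of_row_eq_one (by rw [hs]; rfl)]
    omega

theorem endHeight_take_pos (hM : IsMotzkin f l) (humber : UmberAdmissible f l) {k : ℕ}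
    (h₁ : 1 ≤ k) (h₂ : k ≤ l.length) (hrow : (l.getD (k - 1) .up).row = 0) :
    0 < endHeight f (l.take k) := by
  have hpre := l.take_sub_one_append_getD_prefix .up h₁ h₂
  have hprev := hM _ (l.take_prefix (k - 1))
  have hU := l.count_take_eq_count_take_sub_one_add .up .up h₁ h₂
  have hD := l.count_take_eq_count_take_sub_one_add .up .down h₁ h₂
  rw [endHeight_eq] at hprev ⊢
  cases hs : l.getD (k - 1) .up
  · simp only [hs, if_true, reduceCtorEq, if_false] at hU hD
    push_cast [hU, hD]
    omega
  · rw [hs] at hrow; exact absurd hrow one_ne_zero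
  · rw [hs] at hpre
    have hne := (humber _ hpre).2
    rw [endHeight_eq] at hne
    simp only [hs, reduceCtorEq, if_false] at hU hD
    rw [hU, hD]
    omega
  · rw [hs] at hrow; exact absurd hrow one_ne_zero

theorem lt_of_cellOf_le (hM : IsMotzkin f l) (humber : UmberAdmissible f l) {a b : ℕ}
    (ha₁ : 1 ≤ a) (ha₂ : a ≤ l.length) (hne : cellOf f l a ≠ cellOf f l b)
    (h₁ : (cellOf f l a).1 ≤ (cellOf f l b).1) (h₂ : (cellOf f l a).2 ≤ (cellOf f l b).2) :
    a < b := by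
  by_contra! hba
  by_cases hrow : (cellOf f l a).1 = (cellOf f l b).1
  · exact hne (Prod.ext hrow (le_antisymm h₂ (cellOf_snd_le_of_le hba hrow.symm)))
  have hra := (l.getD (a - 1) .up).row_le_one
  have hrb := (l.getD (b - 1) .up).row_le_one
  rw [cellOf_fst, cellOf_fst] at h₁ hrow
  have hpos := endHeight_take_pos hM humber ha₁ ha₂ (by omega)
  rw [cellOf_of_row_eq_zero (by omega), cellOf_of_row_eq_one (by omega)] at h₂
  have hD := l.count_take_mono .down hba
  rw [endHeight_eq] at hpos
  simp only at h₂ hD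
  omega

theorem isSVT_tableauOfPath (hlen : l.length = n) (hup : l.count .up = e + t - f)
    (hdn : l.count .down = e) (hM : IsMotzkin f l) (humber : UmberAdmissible f l)
    (hdenim : DenimAdmissible l) : IsSVT n e t f (tableauOfPath n f l) := by
  have hshape {k : ℕ} (hk : k ∈ Icc 1 n) : InShape e t f (cellOf f l k) := by
    rw [Finset.mem_Icc] at hk
    exact cellOf_inShape hup hdn humber hdenim hk.1 (by omega)
  have htake : l.take n = l := List.take_of_length_le hlen.le
  refine ⟨?_, ?_, ?_, ?_, ?_⟩
  · intro p hp
    refine Finset.filter_eq_empty_iff.mpr fun k hk hkp => hp (hkp ▸ hshape hk)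
  · rintro ⟨r, j⟩ (⟨rfl, hj₁, hj₂⟩ | ⟨rfl, hj₁, hj₂⟩)
    · obtain ⟨i, hi₁, hin, -, -, hcell⟩ :=
        exists_cellOf_eq_zero (f := f) (m := j - f) (k := n) (by omega) (by rw [htake]; omega)
      refine ⟨i, mem_tableauOfPath.mpr ⟨Finset.mem_Icc.mpr ⟨hi₁, hin⟩, ?_⟩⟩
      rw [hcell, Nat.add_sub_cancel' (by omega)]
    · obtain ⟨i, hi₁, hin, -, hcell⟩ :=
        exists_cellOf_eq_one (f := f) (m := j) (k := n) hj₁ (by rw [htake]; omega)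
      exact ⟨i, mem_tableauOfPath.mpr ⟨Finset.mem_Icc.mpr ⟨hi₁, hin⟩, hcell⟩⟩
  · exact fun p k hk => (mem_tableauOfPath.mp hk).1
  · exact fun k hk => ⟨cellOf f l k, mem_tableauOfPath.mpr ⟨hk, rfl⟩,
      fun q hq => (mem_tableauOfPath.mp hq).2.symm⟩
  · intro p q _ _ hpq h₁ h₂ a ha b hb
    obtain ⟨ha', rfl⟩ := mem_tableauOfPath.mp ha
    obtain ⟨-, rfl⟩ := mem_tableauOfPath.mp hb
    rw [Finset.mem_Icc] at ha'
    exact lt_of_cellOf_le hM humber ha'.1 (by omega) hpq h₁ h₂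

theorem cellOf_inShape_of_isSVT (hT : IsSVT n e t f (tableauOfPath n f l)) {k : ℕ}
    (hk : k ∈ Icc 1 n) : InShape e t f (cellOf f l k) :=
  hT.inShape_of_mem (mem_tableauOfPath.mpr ⟨hk, rfl⟩)

theorem lt_of_isSVT (hT : IsSVT n e t f (tableauOfPath n f l)) {a b : ℕ} (ha : a ∈ Icc 1 n)
    (hb : b ∈ Icc 1 n) (hne : cellOf f l a ≠ cellOf f l b)
    (h₁ : (cellOf f l a).1 ≤ (cellOf f l b).1) (h₂ : (cellOf f l a).2 ≤ (cellOf f l b).2) :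
    a < b :=
  hT.lt (mem_tableauOfPath.mpr ⟨ha, rfl⟩) (mem_tableauOfPath.mpr ⟨hb, rfl⟩) hne h₁ h₂

theorem isMotzkin_of_isSVT (hlen : l.length = n) (hup : l.count .up = e + t - f)
    (hT : IsSVT n e t f (tableauOfPath n f l)) : IsMotzkin f l := by
  intro p hp
  rw [List.prefix_iff_eq_take.mp hp, endHeight_eq]
  set k := p.length
  have hk : k ≤ n := hlen ▸ hp.length_le
  by_contra! hneg
  obtain ⟨i₁, hi₁, hi₁k, -, hcell₁⟩ :=
    exists_cellOf_eq_one (f := f) (l := l) (m := f + (l.take k).count .up + 1) (k := k) (by omega)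
      (by omega)
  have hshape₁ := cellOf_inShape_of_isSVT hT (Finset.mem_Icc.mpr ⟨hi₁, by omega⟩)
  rw [hcell₁] at hshape₁
  obtain ⟨i₀, hi₀, -, hi₀n, hcount₀, hcell₀⟩ :=
    exists_cellOf_eq_zero (f := f) (l := l) (m := (l.take k).count .up + 1) (k := n) (by omega)
      (by rw [List.take_of_length_le hlen.le]; unfold InShape at hshape₁; omega)
  have hlt := lt_of_isSVT hT (Finset.mem_Icc.mpr ⟨hi₀, by omega⟩)
    (Finset.mem_Icc.mpr ⟨hi₁, by omega⟩) (by simp [hcell₀, hcell₁])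
    (by simp [hcell₀, hcell₁]) (by simp [hcell₀, hcell₁]; omega)
  have := l.count_take_mono .up (show i₀ ≤ k by omega)
  simp only at this
  omega

theorem umberAdmissible_of_isSVT (hlen : l.length = n)
    (hT : IsSVT n e t f (tableauOfPath n f l)) : UmberAdmissible f l := by
  intro p hp
  obtain ⟨hlt, hp, hs⟩ := (List.prefix_append_singleton_iff .up).mp hp
  have hk : p.length + 1 ∈ Icc 1 n := Finset.mem_Icc.mpr ⟨by omega, by omega⟩
  have hrow : (l.getD (p.length + 1 - 1) .up).row = 0 := by rw [Nat.add_sub_cancel, hs]; rfl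
  have hshape := cellOf_inShape_of_isSVT hT hk
  have hU := l.count_take_eq_count_take_sub_one_add .up .up (k := p.length + 1) (by omega)
    (by omega)
  rw [cellOf_of_row_eq_zero hrow] at hshape
  simp only [Nat.add_sub_cancel, hs, reduceCtorEq, if_false, add_zero] at hU
  unfold InShape at hshape
  refine ⟨?_, fun h0 => ?_⟩
  · rw [hp]; exact List.count_pos_iff.mp (by omega)
  · rw [hp, endHeight_eq] at h0
    obtain ⟨i, hi₁, hik, -, hcell⟩ :=
      exists_cellOf_eq_one (f := f) (l := l) (m := f + (l.take p.length).count .up) (k := p.length)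
        (by omega) (by omega)
    have := lt_of_isSVT hT hk (Finset.mem_Icc.mpr ⟨hi₁, by omega⟩)
      (by simp [cellOf_of_row_eq_zero hrow, hcell]) (by simp [cellOf_of_row_eq_zero hrow, hcell])
      (by simp [cellOf_of_row_eq_zero hrow, hcell, hU])
    omega

theorem denimAdmissible_of_isSVT (hlen : l.length = n)
    (hT : IsSVT n e t f (tableauOfPath n f l)) : DenimAdmissible l := by
  intro p hp
  obtain ⟨hlt, hp, hs⟩ := (List.prefix_append_singleton_iff .up).mp hp
  have hk : p.length + 1 ∈ Icc 1 n := Finset.mem_Icc.mpr ⟨by omega, by omega⟩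
  have hrow : (l.getD (p.length + 1 - 1) .up).row = 1 := by rw [Nat.add_sub_cancel, hs]; rfl
  have hshape := cellOf_inShape_of_isSVT hT hk
  have hD := l.count_take_eq_count_take_sub_one_add .up .down (k := p.length + 1) (by omega)
    (by omega)
  rw [cellOf_of_row_eq_one hrow] at hshape
  simp only [Nat.add_sub_cancel, hs, reduceCtorEq, if_false, add_zero] at hD
  unfold InShape at hshape
  rw [hp]
  exact List.count_pos_iff.mp (by omega)

theorem isSVT_tableauOfPath_iff (hlen : l.length = n) (hup : l.count .up = e + t - f)
    (hdn : l.count .down = e) :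
    IsSVT n e t f (tableauOfPath n f l) ↔
      IsMotzkin f l ∧ UmberAdmissible f l ∧ DenimAdmissible l :=
  ⟨fun hT => ⟨isMotzkin_of_isSVT hlen hup hT, umberAdmissible_of_isSVT hlen hT,
      denimAdmissible_of_isSVT hlen hT⟩,
    fun ⟨hM, humber, hdenim⟩ => isSVT_tableauOfPath hlen hup hdn hM humber hdenim⟩

theorem rowEntries_tableauOfPath (hlen : l.length = n)
    (hT : IsSVT n e t f (tableauOfPath n f l)) (r : ℕ) :
    rowEntries (e + t) r (tableauOfPath n f l) = l.countP (·.row = r) := by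
  have hfiber (j : ℕ) : tableauOfPath n f l (r, j) =
      {k ∈ {k ∈ Icc 1 n | (cellOf f l k).1 = r} | (cellOf f l k).2 = j} := by
    ext k
    simp [mem_tableauOfPath, Prod.ext_iff, and_assoc]
  rw [rowEntries, Finset.sum_congr rfl fun j _ => by rw [hfiber j],
    ← Finset.card_eq_sum_card_fiberwise]
  · simp only [cellOf_fst]
    rw [l.card_filter_Icc_getD .up (·.row = r) hlen.ge, List.take_of_length_le hlen.le]
  · intro k hk
    have hshape := cellOf_inShape_of_isSVT hT (Finset.mem_filter.mp hk).1
    simp only [Finset.coe_range, Set.mem_Iio]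
    unfold InShape at hshape
    omega

theorem cellOf_ne_of_lt {i k : ℕ} (h₁ : 1 ≤ k) (h₂ : k ≤ l.length) (hik : i < k)
    (hs : l.getD (k - 1) .up = .up ∨ l.getD (k - 1) .up = .down) :
    cellOf f l i ≠ cellOf f l k := by
  intro heq
  have hrow := congrArg Prod.fst heq
  rw [cellOf_fst, cellOf_fst] at hrow
  rcases hs with hs | hs
  · have hU := l.count_take_eq_count_take_sub_one_add .up .up h₁ h₂
    have hmono : (l.take i).count .up ≤ (l.take (k - 1)).count .up :=
      l.count_take_mono .up (by omega)
    rw [cellOf_of_row_eq_zero (by rw [hrow, hs]; rfl), cellOf_of_row_eq_zero (by rw [hs]; rfl)]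
      at heq
    simp only [hs, if_true, Prod.mk.injEq] at hU heq
    omega
  · have hD := l.count_take_eq_count_take_sub_one_add .up .down h₁ h₂
    have hmono : (l.take i).count .down ≤ (l.take (k - 1)).count .down :=
      l.count_take_mono .down (by omega)
    rw [cellOf_of_row_eq_one (by rw [hrow, hs]; rfl), cellOf_of_row_eq_one (by rw [hs]; rfl)]
      at heq
    simp only [hs, if_true, Prod.mk.injEq] at hD heq
    omega

theorem exists_lt_cellOf_eq {k : ℕ} (hshape : InShape e t f (cellOf f l k)) (h₁ : 1 ≤ k)
    (h₂ : k ≤ l.length) (hs : l.getD (k - 1) .up = .hu ∨ l.getD (k - 1) .up = .hd) :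
    ∃ i, 1 ≤ i ∧ i < k ∧ cellOf f l i = cellOf f l k := by
  unfold InShape at hshape
  rcases hs with hs | hs
  · have hU := l.count_take_eq_count_take_sub_one_add .up .up h₁ h₂
    rw [cellOf_of_row_eq_zero (by rw [hs]; rfl)] at hshape ⊢
    simp only [hs, reduceCtorEq, if_false, add_zero] at hU
    obtain ⟨i, hi₁, hik, -, -, hcell⟩ := exists_cellOf_eq_zero (f := f) (l := l)
      (m := (l.take k).count .up) (k := k - 1) (by omega) hU.le
    exact ⟨i, hi₁, by omega, hcell⟩
  · have hD := l.count_take_eq_count_take_sub_one_add .up .down h₁ h₂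
    rw [cellOf_of_row_eq_one (by rw [hs]; rfl)] at hshape ⊢
    simp only [hs, reduceCtorEq, if_false, add_zero] at hD
    obtain ⟨i, hi₁, hik, -, hcell⟩ := exists_cellOf_eq_one (f := f) (l := l)
      (m := (l.take k).count .down) (k := k - 1) (by omega) hD.le
    exact ⟨i, hi₁, by omega, hcell⟩

end PathToTableau

open Classical in
noncomputable def entryCell (T : ℕ × ℕ → Finset ℕ) (k : ℕ) : ℕ × ℕ :=
  if h : ∃ p, k ∈ T p then h.choose else (0, 0)

noncomputable def cellMin (T : ℕ × ℕ → Finset ℕ) (p : ℕ × ℕ) : ℕ :=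
  sInf (T p : Set ℕ)

noncomputable def entryStep (T : ℕ × ℕ → Finset ℕ) (k : ℕ) : MStep :=
  if cellMin T (entryCell T k) = k then
    if (entryCell T k).1 = 0 then .up else .down
  else if (entryCell T k).1 = 0 then .hu else .hd

noncomputable def pathOfTableau (T : ℕ × ℕ → Finset ℕ) (n : ℕ) : List MStep :=
  (List.range n).map fun i => entryStep T (i + 1)

section TableauToPath

variable {n e t f : ℕ} {T : ℕ × ℕ → Finset ℕ}

theorem length_pathOfTableau : (pathOfTableau T n).length = n := by
  simp [pathOfTableau]

theorem getD_pathOfTableau {k : ℕ} (hk : k ∈ Icc 1 n) :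
    (pathOfTableau T n).getD (k - 1) .up = entryStep T k := by
  rw [Finset.mem_Icc] at hk
  rw [pathOfTableau, List.getD_eq_getElem _ _ (by simp; omega)]
  simp [Nat.sub_add_cancel hk.1]

theorem cellMin_le {p : ℕ × ℕ} {k : ℕ} (hk : k ∈ T p) : cellMin T p ≤ k :=
  Nat.sInf_le hk

theorem entryStep_eq_up_iff {k : ℕ} :
    entryStep T k = .up ↔ (entryCell T k).1 = 0 ∧ cellMin T (entryCell T k) = k := by
  unfold entryStep; split_ifs <;> simp_all

namespace IsSVT

variable (hT : IsSVT n e t f T)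
include hT

theorem mem_entryCell {k : ℕ} (hk : k ∈ Icc 1 n) : k ∈ T (entryCell T k) := by
  have hex : ∃ p, k ∈ T p := (hT.2.2.2.1 k hk).exists
  rw [entryCell, dif_pos hex]
  exact hex.choose_spec

theorem entryCell_eq {k : ℕ} {p : ℕ × ℕ} (hk : k ∈ T p) : entryCell T k = p :=
  (hT.2.2.2.1 k (hT.2.2.1 p k hk)).unique (hT.mem_entryCell (hT.2.2.1 p k hk)) hk

theorem inShape_entryCell {k : ℕ} (hk : k ∈ Icc 1 n) : InShape e t f (entryCell T k) :=
  hT.inShape_of_mem (hT.mem_entryCell hk)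

theorem cellMin_mem {p : ℕ × ℕ} (hp : InShape e t f p) : cellMin T p ∈ T p :=
  Nat.sInf_mem (by exact_mod_cast hT.2.1 p hp)

theorem cellMin_le_card {p : ℕ × ℕ} (hp : InShape e t f p) : cellMin T p ≤ n :=
  (Finset.mem_Icc.mp (hT.2.2.1 _ _ (hT.cellMin_mem hp))).2

theorem entryCell_cellMin {p : ℕ × ℕ} (hp : InShape e t f p) : entryCell T (cellMin T p) = p :=
  hT.entryCell_eq (hT.cellMin_mem hp)

theorem cellMin_le_iff {r j j' k : ℕ} (hk : k ∈ T (r, j)) (hj' : InShape e t f (r, j')) :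
    cellMin T (r, j') ≤ k ↔ j' ≤ j := by
  constructor
  · intro h
    by_contra! hjj
    have := hT.lt hk (hT.cellMin_mem hj') (by simp; omega) le_rfl hjj.le
    omega
  · intro h
    rcases h.lt_or_eq with h | rfl
    · exact (hT.lt (hT.cellMin_mem hj') hk (by simp; omega) le_rfl h.le).le
    · exact cellMin_le hk

theorem row_entryStep {k : ℕ} (hk : k ∈ Icc 1 n) : (entryStep T k).row = (entryCell T k).1 := by
  have hshape := hT.inShape_entryCell hk
  unfold InShape at hshape
  unfold entryStep
  split_ifs <;> simp_all [MStep.row]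

theorem entryStep_eq_down_iff {k : ℕ} (hk : k ∈ Icc 1 n) :
    entryStep T k = .down ↔ (entryCell T k).1 = 1 ∧ cellMin T (entryCell T k) = k := by
  have hshape := hT.inShape_entryCell hk
  unfold InShape at hshape
  unfold entryStep
  split_ifs <;> simp_all

theorem card_opening_entries (r : ℕ) {k : ℕ} (hk : k ≤ n) :
    #{i ∈ Icc 1 k | (entryCell T i).1 = r ∧ cellMin T (entryCell T i) = i} =
      #{j ∈ range (e + t + 1) | InShape e t f (r, j) ∧ cellMin T (r, j) ≤ k} := by
  apply Finset.card_nbij' (fun i => (entryCell T i).2) (fun j => cellMin T (r, j))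
  · intro i hi
    simp only [Finset.coe_filter, Finset.mem_Icc, Set.mem_ofPred_eq, Finset.mem_range] at hi ⊢
    obtain ⟨⟨hi₁, hik⟩, hrow, hmin⟩ := hi
    have hcell : (r, (entryCell T i).2) = entryCell T i := Prod.ext hrow.symm rfl
    have hshape := hT.inShape_entryCell (Finset.mem_Icc.mpr ⟨hi₁, by omega⟩)
    refine ⟨?_, hcell ▸ hshape, by rw [hcell, hmin]; exact hik⟩
    unfold InShape at hshape
    omega
  · intro j hj
    simp only [Finset.coe_filter, Finset.mem_Icc, Set.mem_ofPred_eq, Finset.mem_range] at hj ⊢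
    obtain ⟨-, hshape, hle⟩ := hj
    have hmem := Finset.mem_Icc.mp (hT.2.2.1 _ _ (hT.cellMin_mem hshape))
    rw [hT.entryCell_cellMin hshape]
    exact ⟨⟨hmem.1, hle⟩, rfl, rfl⟩
  · intro i hi
    simp only [Finset.coe_filter, Set.mem_ofPred_eq] at hi
    simp only [← hi.2.1]
    exact hi.2.2
  · intro j hj
    simp only [Finset.coe_filter, Set.mem_ofPred_eq] at hj
    simp only [hT.entryCell_cellMin hj.2.1]


theorem count_up_take_pathOfTableau {k : ℕ} (hk : k ≤ n) :
    ((pathOfTableau T n).take k).count .up =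
      #{j ∈ range (e + t + 1) | InShape e t f (0, j) ∧ cellMin T (0, j) ≤ k} := by
  rw [← List.card_filter_Icc_getD_eq _ _ _ (length_pathOfTableau.symm ▸ hk),
    ← hT.card_opening_entries 0 hk]
  refine congrArg card (Finset.filter_congr fun i hi => ?_)
  rw [getD_pathOfTableau (Finset.Icc_subset_Icc_right hk hi), entryStep_eq_up_iff]

theorem count_down_take_pathOfTableau {k : ℕ} (hk : k ≤ n) :
    ((pathOfTableau T n).take k).count .down =
      #{j ∈ range (e + t + 1) | InShape e t f (1, j) ∧ cellMin T (1, j) ≤ k} := by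
  rw [← List.card_filter_Icc_getD_eq _ _ _ (length_pathOfTableau.symm ▸ hk),
    ← hT.card_opening_entries 1 hk]
  refine congrArg card (Finset.filter_congr fun i hi => ?_)
  have hi' := Finset.Icc_subset_Icc_right hk hi
  rw [getD_pathOfTableau hi', hT.entryStep_eq_down_iff hi']

theorem count_up_pathOfTableau : (pathOfTableau T n).count .up = e + t - f := by
  rw [← List.take_of_length_le length_pathOfTableau.le, hT.count_up_take_pathOfTableau le_rfl,
    Finset.filter_congr fun j _ => and_iff_left_of_imp hT.cellMin_le_card]
  have : {j ∈ range (e + t + 1) | InShape e t f (0, j)} = Icc (f + 1) (e + t) := by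
    ext j; simp [InShape]
  rw [this, Nat.card_Icc]
  omega

theorem count_down_pathOfTableau : (pathOfTableau T n).count .down = e := by
  rw [← List.take_of_length_le length_pathOfTableau.le, hT.count_down_take_pathOfTableau le_rfl,
    Finset.filter_congr fun j _ => and_iff_left_of_imp hT.cellMin_le_card]
  have : {j ∈ range (e + t + 1) | InShape e t f (1, j)} = Icc 1 e := by
    ext j; simp [InShape]; omega
  rw [this, Nat.card_Icc]
  omega

theorem cellOf_pathOfTableau {k : ℕ} (hk : k ∈ Icc 1 n) :
    cellOf f (pathOfTableau T n) k = entryCell T k := by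
  rcases hcell : entryCell T k with ⟨r, j⟩
  have hkT : k ∈ T (r, j) := hcell ▸ hT.mem_entryCell hk
  have hshape : InShape e t f (r, j) := hcell ▸ hT.inShape_entryCell hk
  have hrow : ((pathOfTableau T n).getD (k - 1) .up).row = r := by
    rw [getD_pathOfTableau hk, hT.row_entryStep hk, hcell]
  have hkn : k ≤ n := (Finset.mem_Icc.mp hk).2
  rcases hshape with ⟨rfl, hj₁, hj₂⟩ | ⟨rfl, hj₁, hj₂⟩
  · have : {j' ∈ range (e + t + 1) | InShape e t f (0, j') ∧ cellMin T (0, j') ≤ k} =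
        Icc (f + 1) j := by
      rw [Finset.filter_congr fun j' _ => and_congr_right (hT.cellMin_le_iff hkT)]
      ext j'; simp [InShape]; omega
    rw [cellOf_of_row_eq_zero hrow, hT.count_up_take_pathOfTableau hkn, this, Nat.card_Icc]
    congr 1
    omega
  · have : {j' ∈ range (e + t + 1) | InShape e t f (1, j') ∧ cellMin T (1, j') ≤ k} =
        Icc 1 j := by
      rw [Finset.filter_congr fun j' _ => and_congr_right (hT.cellMin_le_iff hkT)]
      ext j'; simp [InShape]; omega
    rw [cellOf_of_row_eq_one hrow, hT.count_down_take_pathOfTableau hkn, this, Nat.card_Icc]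
    rfl

theorem tableauOfPath_pathOfTableau : tableauOfPath n f (pathOfTableau T n) = T := by
  funext p
  ext k
  rw [mem_tableauOfPath]
  constructor
  · rintro ⟨hk, hcell⟩
    rw [hT.cellOf_pathOfTableau hk] at hcell
    exact hcell ▸ hT.mem_entryCell hk
  · intro hk
    have hk' := hT.2.2.1 p k hk
    exact ⟨hk', by rw [hT.cellOf_pathOfTableau hk', hT.entryCell_eq hk]⟩

end IsSVT

end TableauToPath

section RoundTrip

variable {n e t f : ℕ} {l : List MStep}

theorem cellMin_tableauOfPath_eq_iff (hlen : l.length = n)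
    (hT : IsSVT n e t f (tableauOfPath n f l)) {k : ℕ} (hk : k ∈ Icc 1 n) :
    cellMin (tableauOfPath n f l) (cellOf f l k) = k ↔
      l.getD (k - 1) .up = .up ∨ l.getD (k - 1) .up = .down := by
  have hk' := Finset.mem_Icc.mp hk
  have hshape := cellOf_inShape_of_isSVT hT hk
  obtain ⟨hmin, hmin_cell⟩ := mem_tableauOfPath.mp (hT.cellMin_mem hshape)
  have hmin_le : cellMin (tableauOfPath n f l) (cellOf f l k) ≤ k :=
    cellMin_le (mem_tableauOfPath.mpr ⟨hk, rfl⟩)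
  constructor
  · intro heq
    by_contra! hs
    obtain ⟨i, hi₁, hik, hcell⟩ := exists_lt_cellOf_eq hshape hk'.1 (by omega)
      (by cases h : l.getD (k - 1) .up <;> simp_all)
    have hi : i ∈ tableauOfPath n f l (cellOf f l k) :=
      mem_tableauOfPath.mpr ⟨Finset.mem_Icc.mpr ⟨hi₁, by omega⟩, hcell⟩
    have := cellMin_le hi
    omega
  · intro hs
    by_contra hne
    exact cellOf_ne_of_lt hk'.1 (by omega) (lt_of_le_of_ne hmin_le hne) hs hmin_cell

theorem entryStep_tableauOfPath (hlen : l.length = n) (hT : IsSVT n e t f (tableauOfPath n f l))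
    {k : ℕ} (hk : k ∈ Icc 1 n) : entryStep (tableauOfPath n f l) k = l.getD (k - 1) .up := by
  have hcell := hT.entryCell_eq (mem_tableauOfPath.mpr ⟨hk, rfl⟩)
  have hmin := cellMin_tableauOfPath_eq_iff hlen hT hk
  have hrow := cellOf_fst f l k
  unfold entryStep
  rw [hcell]
  cases hs : l.getD (k - 1) .up <;> simp_all [MStep.row]

theorem pathOfTableau_tableauOfPath (hlen : l.length = n)
    (hT : IsSVT n e t f (tableauOfPath n f l)) : pathOfTableau (tableauOfPath n f l) n = l := by
  refine List.ext_getElem (by rw [length_pathOfTableau, hlen]) fun i hi hi' => ?_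
  have hk : i + 1 ∈ Icc 1 n := Finset.mem_Icc.mpr ⟨by omega, by omega⟩
  rw [← List.getD_eq_getElem _ .up hi, ← List.getD_eq_getElem _ .up hi']
  exact (getD_pathOfTableau hk).trans (entryStep_tableauOfPath hlen hT hk)

end RoundTrip

def IsCountedTableau (n t c d e f : ℕ) (T : ℕ × ℕ → Finset ℕ) : Prop :=
  IsSVT n e t f T ∧ rowEntries (e + t) 0 T = c + (e + t - f) ∧ rowEntries (e + t) 1 T = d + e

def IsCountedPath (n t c d e f : ℕ) (l : List MStep) : Prop :=
  IsMotzkin (f : ℤ) l ∧ endHeight (f : ℤ) l = (t : ℤ) ∧ l.length = n ∧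
    l.count MStep.hu = c ∧ l.count MStep.hd = d ∧
    l.count MStep.up = e + t - f ∧ l.count MStep.down = e ∧
    UmberAdmissible f l ∧ DenimAdmissible l

section Bijection

variable {n t c d e f : ℕ}

theorem IsCountedPath.isCountedTableau {l : List MStep} (hl : IsCountedPath n t c d e f l) :
    IsCountedTableau n t c d e f (tableauOfPath n f l) := by
  obtain ⟨hM, -, hlen, hhu, hhd, hup, hdn, humber, hdenim⟩ := hl
  have hT := isSVT_tableauOfPath hlen hup hdn hM humber hdenim
  refine ⟨hT, ?_, ?_⟩
  · rw [rowEntries_tableauOfPath hlen hT, countP_row_eq_zero]; omega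
  · rw [rowEntries_tableauOfPath hlen hT, countP_row_eq_one]; omega

theorem IsCountedTableau.isCountedPath (hf : f ≤ e + t) {T : ℕ × ℕ → Finset ℕ}
    (hT : IsCountedTableau n t c d e f T) : IsCountedPath n t c d e f (pathOfTableau T n) := by
  obtain ⟨hT, hrow₀, hrow₁⟩ := hT
  have hlen : (pathOfTableau T n).length = n := length_pathOfTableau
  have hup := hT.count_up_pathOfTableau
  have hdn := hT.count_down_pathOfTableau
  have hround := hT.tableauOfPath_pathOfTableau
  have hT' : IsSVT n e t f (tableauOfPath n f (pathOfTableau T n)) := by rwa [hround]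
  obtain ⟨hM, humber, hdenim⟩ := (isSVT_tableauOfPath_iff hlen hup hdn).mp hT'
  have hcount₀ := rowEntries_tableauOfPath hlen hT' 0
  have hcount₁ := rowEntries_tableauOfPath hlen hT' 1
  rw [hround, countP_row_eq_zero] at hcount₀
  rw [hround, countP_row_eq_one] at hcount₁
  refine ⟨hM, ?_, hlen, by omega, by omega, hup, hdn, humber, hdenim⟩
  rw [endHeight_eq, hup, hdn, Nat.cast_sub hf]
  push_cast
  ring

noncomputable def tableauPathEquiv (hf : f ≤ e + t) :
    {T // IsCountedTableau n t c d e f T} ≃ {l // IsCountedPath n t c d e f l} where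
  toFun T := ⟨pathOfTableau T.1 n, T.2.isCountedPath hf⟩
  invFun l := ⟨tableauOfPath n f l.1, l.2.isCountedTableau⟩
  left_inv T := Subtype.ext T.2.1.tableauOfPath_pathOfTableau
  right_inv l := Subtype.ext (pathOfTableau_tableauOfPath l.2.2.2.1 l.2.isCountedTableau.1)

end Bijection

theorem svt_equiv_motzkin_general (n t c d e f : ℕ) (hf : f ≤ e + t) :
    Nonempty
      ({T : ℕ × ℕ → Finset ℕ // IsSVT n e t f T ∧
          rowEntries (e + t) 0 T = c + (e + t - f) ∧ rowEntries (e + t) 1 T = d + e} ≃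
       {l : List MStep // IsMotzkin (f : ℤ) l ∧ endHeight (f : ℤ) l = (t : ℤ) ∧
          l.length = n ∧
          l.count MStep.hu = c ∧ l.count MStep.hd = d ∧
          l.count MStep.up = e + t - f ∧ l.count MStep.down = e ∧
          (∀ p : List MStep, p ++ [MStep.hu] <+: l →
            (MStep.up ∈ p ∧ endHeight (f : ℤ) p ≠ 0)) ∧
          (∀ p : List MStep, p ++ [MStep.hd] <+: l → MStep.down ∈ p)}) :=
  ⟨tableauPathEquiv hf⟩

/-- Set-valued standard tableaux of shape `(e+t,e)/(f,0)` with `c+e-f+t` entries in the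
first row and `d+e` entries in the second row are in bijection with two-coloured
Motzkin paths from `(0,f)` to `(n,t)` with `c` umber horizontal steps, `d` denim
horizontal steps, `e-f+t` up-steps and `e` down-steps (hence `n = c+d+2e-f+t` steps in
total), where an umber horizontal step occurs neither before the first up-step nor at
height `0`, and a denim horizontal step does not occur before the first down-step. -/
theorem svt_equiv_motzkin (n t c d e f : ℕ) (hf : f ≤ e + t) (hn : c + d + 2 * e + t = n + f) :
    Nonempty
      ({T : ℕ × ℕ → Finset ℕ // IsSVT n e t f T ∧
          rowEntries (e + t) 0 T = c + (e + t - f) ∧ rowEntries (e + t) 1 T = d + e} ≃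
       {l : List MStep // IsMotzkin (f : ℤ) l ∧ endHeight (f : ℤ) l = (t : ℤ) ∧
          l.length = n ∧
          l.count MStep.hu = c ∧ l.count MStep.hd = d ∧
          l.count MStep.up = e + t - f ∧ l.count MStep.down = e ∧
          (∀ p : List MStep, p ++ [MStep.hu] <+: l →
            (MStep.up ∈ p ∧ endHeight (f : ℤ) p ≠ 0)) ∧
          (∀ p : List MStep, p ++ [MStep.hd] <+: l → MStep.down ∈ p)}) :=
  svt_equiv_motzkin_general n t c d e f hf
end

section
/- Let n and m be positive integers and t a non-negative integer. The number of set-valued standard tableaux of shape (e+t,e), for some non-negative integer e, with m entries in the first row and n entries in total, equals [m=n]·C(n-1,t-1) + [m<n]·(t/(n-1))·C(n,m)·C(n-1,m-t-1) + (1/(n-1))·C(n-1,m)·C(n-1,m-t-1), where [S] is 1 if S holds and 0 otherwise. -/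
/-- Binomial coefficient `C(a,b)` for integers `a`, `b`, with the convention that it
vanishes when `b < 0` or `b > a`. -/
def zchoose (a b : ℤ) : ℤ :=
  if 0 ≤ b ∧ b ≤ a then (a.toNat).choose b.toNat else 0

theorem zchoose_natCast (a b : ℕ) : zchoose a b = a.choose b := by
  unfold zchoose
  split_ifs with h
  · simp
  · rw [Nat.choose_eq_zero_of_lt (by omega), Nat.cast_zero]

theorem zchoose_of_neg {a b : ℤ} (hb : b < 0) : zchoose a b = 0 := if_neg (by omega)

theorem zchoose_of_lt {a b : ℤ} (h : a < b) : zchoose a b = 0 := if_neg (by omega)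

theorem zchoose_self {a : ℤ} (ha : 0 ≤ a) : zchoose a a = 1 := by
  simp [zchoose, ha]

theorem zchoose_symm (a b : ℤ) : zchoose a (a - b) = zchoose a b := by
  unfold zchoose
  by_cases h : 0 ≤ b ∧ b ≤ a
  · rw [if_pos (by omega), if_pos h, show (a - b).toNat = a.toNat - b.toNat by omega,
      Nat.choose_symm (by omega)]
  · rw [if_neg (by omega), if_neg h]

theorem zchoose_succ_succ {a : ℤ} (ha : 0 ≤ a) (b : ℤ) :
    zchoose (a + 1) (b + 1) = zchoose a b + zchoose a (b + 1) := by
  lift a to ℕ using ha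
  rcases lt_trichotomy b (-1) with hb | rfl | hb
  · simp only [zchoose_of_neg (show b < 0 by omega), zchoose_of_neg (show b + 1 < 0 by omega),
      add_zero]
  · simp [zchoose, show (0 : ℤ) ≤ a + 1 by omega]
  · lift b to ℕ using (by omega)
    rw [show (a : ℤ) + 1 = ((a + 1 : ℕ) : ℤ) by push_cast; rfl,
      show (b : ℤ) + 1 = ((b + 1 : ℕ) : ℤ) by push_cast; rfl,
      zchoose_natCast, zchoose_natCast, zchoose_natCast, Nat.choose_succ_succ', Nat.cast_add]

theorem mul_zchoose {a : ℤ} (ha : 0 ≤ a) (b : ℤ) :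
    b * zchoose a b = a * zchoose (a - 1) (b - 1) := by
  rcases lt_or_ge b 1 with hb | hb
  · rw [zchoose_of_neg (by omega : b - 1 < 0)]
    rcases lt_or_ge b 0 with hb0 | hb0
    · rw [zchoose_of_neg hb0]; ring
    · rw [show b = 0 by omega]; ring
  lift a to ℕ using ha
  lift b to ℕ using (by omega)
  obtain ⟨b, rfl⟩ : ∃ c, b = c + 1 := ⟨b - 1, by omega⟩
  rcases a with _ | a
  · rw [zchoose_of_lt (by omega)]; ring
  rw [show ((a + 1 : ℕ) : ℤ) - 1 = (a : ℕ) by push_cast; ring,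
    show ((b + 1 : ℕ) : ℤ) - 1 = (b : ℕ) by push_cast; ring,
    zchoose_natCast, zchoose_natCast]
  exact_mod_cast ((Nat.add_one_mul_choose_eq a b).trans (mul_comm _ _)).symm

theorem sub_mul_zchoose {a : ℤ} (ha : 0 ≤ a) (b : ℤ) :
    (a - b) * zchoose a b = a * zchoose (a - 1) b := by
  rw [← zchoose_symm a b, mul_zchoose ha, ← zchoose_symm (a - 1) b]
  ring_nf

theorem zchoose_sub_one_sub_one_eq {a : ℤ} (ha : 0 < a) (b : ℤ) :
    (zchoose (a - 1) (b - 1) : ℚ) = b * zchoose a b / a := by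
  rw [eq_div_iff (by exact_mod_cast ha.ne'), mul_comm]
  exact_mod_cast (mul_zchoose ha.le b).symm

theorem zchoose_sub_one_eq {a : ℤ} (ha : 0 < a) (b : ℤ) :
    (zchoose (a - 1) b : ℚ) = (a - b) * zchoose a b / a := by
  rw [eq_div_iff (by exact_mod_cast ha.ne'), mul_comm]
  exact_mod_cast (sub_mul_zchoose ha.le b).symm

def countFormula (n m t : ℕ) : ℚ :=
  (if m = n then 1 else 0) * (zchoose ((n : ℤ) - 1) ((t : ℤ) - 1) : ℚ)
    + (if m < n then 1 else 0) * ((t : ℚ) / ((n : ℚ) - 1))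
        * (zchoose (n : ℤ) (m : ℤ) : ℚ) * (zchoose ((n : ℤ) - 1) ((m : ℤ) - t - 1) : ℚ)
    + (1 / ((n : ℚ) - 1)) * (zchoose ((n : ℤ) - 1) (m : ℤ) : ℚ)
        * (zchoose ((n : ℤ) - 1) ((m : ℤ) - t - 1) : ℚ)

theorem countFormula_eq_zero_of_lt {n m : ℕ} (h : n < m) (t : ℕ) : countFormula n m t = 0 := by
  simp [countFormula, h.ne', h.not_gt, zchoose_of_lt (show (n : ℤ) - 1 < m by omega)]

theorem countFormula_self (n t : ℕ) :
    countFormula n n t = zchoose ((n : ℤ) - 1) ((t : ℤ) - 1) := by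
  simp [countFormula, zchoose_of_lt (show (n : ℤ) - 1 < n by omega)]

theorem countFormula_of_lt {n m : ℕ} (h : m < n) (t : ℕ) :
    countFormula n m t = (t * zchoose n m + zchoose ((n : ℤ) - 1) m)
      * zchoose ((n : ℤ) - 1) ((m : ℤ) - t - 1) / ((n : ℚ) - 1) := by
  simp only [countFormula, if_neg h.ne, if_pos h]
  ring

theorem countFormula_zero_middle {n : ℕ} (hn : 1 ≤ n) (t : ℕ) : countFormula n 0 t = 0 := by
  rw [countFormula_of_lt hn]
  simp [zchoose_of_neg (show -(t : ℤ) - 1 < 0 by omega)]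

-- `1 / ((1 : ℚ) - 1) = 0`, so only the first summand of `countFormula 1 m t` survives.
theorem countFormula_one (m t : ℕ) : countFormula 1 m t = if m = 1 ∧ t = 1 then 1 else 0 := by
  rcases Nat.lt_or_ge m 1 with hm | hm
  · rw [show m = 0 by omega, countFormula_zero_middle le_rfl, if_neg (by omega)]
  rcases hm.eq_or_lt with rfl | hm
  · rw [countFormula_self]
    rcases eq_or_ne t 1 with rfl | ht
    · simp [zchoose]
    · rw [if_neg (by omega), zchoose, if_neg (by omega), Int.cast_zero]
  · rw [countFormula_eq_zero_of_lt hm, if_neg (by omega)]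

theorem countFormula_succ_of_lt {n m : ℕ} (hm : 1 ≤ m) (h : m < n) (t : ℕ) :
    countFormula (n + 1) m t
      = (if 1 ≤ t then countFormula n (m - 1) t + countFormula n (m - 1) (t - 1) else 0)
        + countFormula n m t + countFormula n m (t + 1) := by
  have hn0 : (0 : ℤ) < n := by omega
  have hn1 : (0 : ℤ) < n + 1 := by omega
  have hn : (n : ℚ) - 1 ≠ 0 := by
    rw [sub_ne_zero]; exact_mod_cast (show n ≠ 1 by omega)
  have hn' : (n : ℚ) ≠ 0 := by exact_mod_cast (show n ≠ 0 by omega)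
  -- every binomial below is a rational multiple of `C(n+1,m)` or of `C(n,m-t-1)`
  have e₁ := zchoose_sub_one_sub_one_eq hn1 m
  have e₂ := zchoose_sub_one_eq hn1 m
  have e₃ := zchoose_sub_one_sub_one_eq hn0 m
  have e₄ := zchoose_sub_one_eq hn0 m
  have e₅ := zchoose_sub_one_eq hn0 (m - t - 1)
  have e₆ := zchoose_sub_one_sub_one_eq hn0 (m - t - 1)
  simp only [add_sub_cancel_right] at e₁ e₂
  push_cast at e₁ e₂ e₃ e₄ e₅ e₆
  rw [countFormula_of_lt (by omega), countFormula_of_lt h, countFormula_of_lt h]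
  split_ifs with ht
  · rw [countFormula_of_lt (by omega), countFormula_of_lt (by omega)]
    push_cast [Nat.cast_sub hm, Nat.cast_sub ht]
    simp only [add_sub_cancel_right]
    rw [show (m : ℤ) - 1 - t - 1 = m - t - 1 - 1 by ring,
      show (m : ℤ) - 1 - (t - 1) - 1 = m - t - 1 by ring,
      show (m : ℤ) - (t + 1) - 1 = m - t - 1 - 1 by ring, e₃, e₄, e₅, e₆, e₁, e₂]
    field_simp
    ring
  · obtain rfl : t = 0 := by omega
    push_cast at e₅ e₆ ⊢
    simp only [sub_zero, zero_mul, zero_add, one_mul, add_sub_cancel_right] at e₅ e₆ ⊢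
    rw [e₃, e₄, e₆, e₁, e₂]
    field_simp
    ring

theorem countFormula_succ_self {n : ℕ} (hn : 1 ≤ n) (t : ℕ) :
    countFormula (n + 1) n t
      = (if 1 ≤ t then countFormula n (n - 1) t + countFormula n (n - 1) (t - 1) else 0)
        + countFormula n n (t + 1) := by
  obtain rfl | hn := (show n = 1 ∨ 2 ≤ n by omega)
  · rw [countFormula_zero_middle le_rfl, countFormula_zero_middle le_rfl, countFormula_self]
    rcases Nat.eq_zero_or_pos t with rfl | ht
    · norm_num [countFormula, zchoose]
    · norm_num [countFormula, zchoose, ht.ne']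
  have hn0 : (0 : ℤ) < n := by omega
  have hn : (n : ℚ) - 1 ≠ 0 := by
    rw [sub_ne_zero]; exact_mod_cast (show n ≠ 1 by omega)
  have hn' : (n : ℚ) ≠ 0 := by exact_mod_cast (show n ≠ 0 by omega)
  have e₁ : zchoose ((n : ℤ) + 1) n = n + 1 := by
    have := sub_mul_zchoose (a := (n : ℤ) + 1) (by omega) n
    rwa [add_sub_cancel_right, add_sub_cancel_left, one_mul, zchoose_self hn0.le, mul_one] at this
  have e₂ : zchoose (n : ℤ) (n - 1) = n := by
    have := sub_mul_zchoose (a := (n : ℤ)) (by omega) (n - 1)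
    rwa [sub_sub_cancel, one_mul, zchoose_self (by omega), mul_one] at this
  have e₃ := zchoose_sub_one_eq hn0 (n - t - 1)
  have e₄ := zchoose_sub_one_sub_one_eq hn0 (n - t - 1)
  push_cast at e₃ e₄
  rw [countFormula_of_lt (by omega), countFormula_self]
  push_cast
  simp only [add_sub_cancel_right]
  rw [← zchoose_symm ((n : ℤ) - 1) t, show (n : ℤ) - 1 - t = n - t - 1 by ring, e₁,
    zchoose_self hn0.le, e₃]
  split_ifs with ht
  · rw [countFormula_of_lt (by omega), countFormula_of_lt (by omega)]
    push_cast [Nat.cast_sub (show 1 ≤ n by omega), Nat.cast_sub ht]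
    rw [show (n : ℤ) - 1 - t - 1 = n - t - 1 - 1 by ring,
      show (n : ℤ) - 1 - (t - 1) - 1 = n - t - 1 by ring, e₂, zchoose_self (by omega), e₃, e₄]
    push_cast
    field_simp
    ring
  · obtain rfl : t = 0 := by omega
    simp only [Nat.cast_zero, sub_zero] at e₄ ⊢
    rw [e₂]
    field_simp
    ring

theorem countFormula_succ {n m : ℕ} (hn : 1 ≤ n) (hm : 1 ≤ m) (t : ℕ) :
    countFormula (n + 1) m t
      = (if 1 ≤ t then countFormula n (m - 1) t + countFormula n (m - 1) (t - 1) else 0)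
        + (if m = n then 0 else countFormula n m t) + countFormula n m (t + 1) := by
  rcases lt_trichotomy m n with h | rfl | h
  · rw [if_neg h.ne, countFormula_succ_of_lt hm h]
  · rw [if_pos rfl, add_zero, countFormula_succ_self hn]
  rw [if_neg h.ne', countFormula_eq_zero_of_lt h, countFormula_eq_zero_of_lt h, add_zero, add_zero]
  obtain rfl | h := (show m = n + 1 ∨ n + 1 < m by omega)
  · rw [countFormula_self, Nat.add_sub_cancel, countFormula_self, countFormula_self]
    split_ifs with ht
    · have := zchoose_succ_succ (a := (n : ℤ) - 1) (by omega) ((t : ℤ) - 2)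
      push_cast [Nat.cast_sub ht]
      rw [show (n : ℤ) + 1 - 1 = n - 1 + 1 by ring, show (t : ℤ) - 1 = t - 2 + 1 by ring, this,
        show (t : ℤ) - 2 + 1 - 1 = t - 2 by ring]
      push_cast
      ring
    · rw [show t = 0 by omega, zchoose_of_neg (by omega)]
      simp
  · rw [countFormula_eq_zero_of_lt h, countFormula_eq_zero_of_lt (by omega),
      countFormula_eq_zero_of_lt (by omega)]
    simp

section Tableaux

open Finset

structure IsSVTOn (S : ℕ × ℕ → Prop) (n : ℕ) (T : ℕ × ℕ → Finset ℕ) : Prop where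
  eq_empty : ∀ p, ¬ S p → T p = ∅
  nonempty : ∀ p, S p → (T p).Nonempty
  subset_Icc : ∀ p, T p ⊆ Icc 1 n
  existsUnique : ∀ k ∈ Icc 1 n, ∃! p : ℕ × ℕ, k ∈ T p
  lt : ∀ p q : ℕ × ℕ, S p → S q → p ≠ q → p.1 ≤ q.1 → p.2 ≤ q.2 → ∀ a ∈ T p, ∀ b ∈ T q, a < b

theorem isSVT_iff_isSVTOn {n e t f : ℕ} {T : ℕ × ℕ → Finset ℕ} :
    IsSVT n e t f T ↔ IsSVTOn (InShape e t f) n T :=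
  ⟨fun ⟨h₁, h₂, h₃, h₄, h₅⟩ => ⟨h₁, h₂, fun p _ hk => h₃ p _ hk, h₄, h₅⟩,
    fun ⟨h₁, h₂, h₃, h₄, h₅⟩ => ⟨h₁, h₂, fun p _ hk => h₃ p hk, h₄, h₅⟩⟩

def IsMaxCell (S : ℕ × ℕ → Prop) (c : ℕ × ℕ) : Prop :=
  S c ∧ ∀ q, S q → c.1 ≤ q.1 → c.2 ≤ q.2 → q = c

def eraseEntry (a : ℕ) (T : ℕ × ℕ → Finset ℕ) : ℕ × ℕ → Finset ℕ :=
  fun p => (T p).erase a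

def insertEntry (a : ℕ) (c : ℕ × ℕ) (T : ℕ × ℕ → Finset ℕ) : ℕ × ℕ → Finset ℕ :=
  Function.update T c (insert a (T c))

section Entries

variable {a : ℕ} {c p : ℕ × ℕ} {T : ℕ × ℕ → Finset ℕ}

theorem insertEntry_self : insertEntry a c T c = insert a (T c) :=
  Function.update_self _ _ _

theorem insertEntry_of_ne (h : p ≠ c) : insertEntry a c T p = T p :=
  Function.update_of_ne h _ _

theorem mem_insertEntry {k : ℕ} : k ∈ insertEntry a c T p ↔ (p = c ∧ k = a) ∨ k ∈ T p := by
  by_cases hp : p = c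
  · subst hp; simp [insertEntry_self]
  · simp [insertEntry_of_ne hp, hp]

theorem insertEntry_self_ne_singleton {k : ℕ} (hk : k ∈ T c) (hka : k ≠ a) :
    insertEntry a c T c ≠ {a} := by
  rw [insertEntry_self]
  exact fun h => hka (mem_singleton.1 (h ▸ mem_insert_of_mem hk))

theorem eraseEntry_insertEntry (ha : ∀ p, a ∉ T p) : eraseEntry a (insertEntry a c T) = T := by
  funext p
  by_cases hpc : p = c
  · subst hpc; simp [eraseEntry, insertEntry_self, ha]
  · simp [eraseEntry, insertEntry_of_ne hpc, ha]

theorem insertEntry_eraseEntry (hc : a ∈ T c) (ha : ∀ p, a ∈ T p → p = c) :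
    insertEntry a c (eraseEntry a T) = T := by
  funext p
  by_cases hpc : p = c
  · subst hpc; simp [eraseEntry, insertEntry_self, insert_erase hc]
  · simp [eraseEntry, insertEntry_of_ne hpc, erase_eq_of_notMem fun h => hpc (ha p h)]

theorem rowEntries_succ (M r : ℕ) (T : ℕ × ℕ → Finset ℕ) :
    rowEntries (M + 1) r T = rowEntries M r T + (T (r, M + 1)).card :=
  sum_range_succ _ _

theorem rowEntries_insertEntry_of_ne {M r : ℕ} (h : c.1 ≠ r) :
    rowEntries M r (insertEntry a c T) = rowEntries M r T :=
  sum_congr rfl fun j _ => congrArg card (insertEntry_of_ne (by rintro rfl; exact h rfl))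

theorem rowEntries_insertEntry {M r j : ℕ} (hj : j ≤ M) (ha : a ∉ T (r, j)) :
    rowEntries M r (insertEntry a (r, j) T) = rowEntries M r T + 1 := by
  have hjM : j ∈ range (M + 1) := mem_range.2 (by omega)
  unfold rowEntries
  rw [← add_sum_erase _ _ hjM, ← add_sum_erase _ (fun i => (T (r, i)).card) hjM,
    sum_congr rfl fun i hi => congrArg card (insertEntry_of_ne (by simpa using (mem_erase.1 hi).1)),
    insertEntry_self, card_insert_of_notMem ha]
  ring

end Entries

namespace IsSVTOn

variable {S S' : ℕ × ℕ → Prop} {n : ℕ} {T : ℕ × ℕ → Finset ℕ}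

theorem mem_shape (h : IsSVTOn S n T) {p : ℕ × ℕ} {k : ℕ} (hk : k ∈ T p) : S p :=
  by_contra fun hp => by simp [h.eq_empty p hp] at hk

theorem le_of_mem (h : IsSVTOn S n T) {p : ℕ × ℕ} {k : ℕ} (hk : k ∈ T p) : k ≤ n :=
  (mem_Icc.1 (h.subset_Icc p hk)).2

theorem succ_notMem (h : IsSVTOn S n T) (p : ℕ × ℕ) : n + 1 ∉ T p :=
  fun hp => by have := h.le_of_mem hp; omega

theorem eq_of_mem (h : IsSVTOn S n T) {p q : ℕ × ℕ} {k : ℕ} (hp : k ∈ T p) (hq : k ∈ T q) :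
    p = q :=
  (h.existsUnique k (h.subset_Icc p hp)).unique hp hq

theorem isMaxCell_of_mem (h : IsSVTOn S n T) {c : ℕ × ℕ} (hc : n ∈ T c) : IsMaxCell S c := by
  refine ⟨h.mem_shape hc, fun q hq h₁ h₂ => by_contra fun hqc => ?_⟩
  obtain ⟨b, hb⟩ := h.nonempty q hq
  have := h.lt c q (h.mem_shape hc) hq (Ne.symm hqc) h₁ h₂ n hc b hb
  exact absurd (h.le_of_mem hb) (not_le.2 this)

theorem le_rowEntries (h : IsSVTOn S n T) {k M r : ℕ} (hk : k ≤ M)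
    (hS : ∀ j, 1 ≤ j → j ≤ k → S (r, j)) : k ≤ rowEntries M r T :=
  calc k = (Icc 1 k).card • 1 := by simp
    _ ≤ ∑ j ∈ Icc 1 k, (T (r, j)).card :=
      card_nsmul_le_sum _ _ _ fun j hj =>
        card_pos.2 (h.nonempty _ (hS j (mem_Icc.1 hj).1 (mem_Icc.1 hj).2))
    _ ≤ rowEntries M r T :=
      sum_le_sum_of_subset fun j hj => mem_range.2 (by have := (mem_Icc.1 hj).2; omega)

theorem sum_card_eq (h : IsSVTOn S n T) {D : Finset (ℕ × ℕ)} (hD : ∀ p, S p → p ∈ D) :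
    ∑ p ∈ D, (T p).card = n := by
  have hunion : D.biUnion T = Icc 1 n := by
    ext k
    simp only [mem_biUnion]
    refine ⟨fun ⟨p, _, hk⟩ => h.subset_Icc p hk, fun hk => ?_⟩
    obtain ⟨p, hp, -⟩ := h.existsUnique k hk
    exact ⟨p, hD p (h.mem_shape hp), hp⟩
  rw [← card_biUnion fun p _ q _ hpq => disjoint_left.2 fun k hp hq => hpq (h.eq_of_mem hp hq),
    hunion, Nat.card_Icc, Nat.add_sub_cancel]

theorem eraseEntry (h : IsSVTOn S (n + 1) T)
    (hS' : ∀ p, S' p ↔ S p ∧ ((T p).erase (n + 1)).Nonempty) :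
    IsSVTOn S' n (eraseEntry (n + 1) T) where
  eq_empty p hp := by
    by_cases hSp : S p
    · exact not_nonempty_iff_eq_empty.1 fun hne => hp ((hS' p).2 ⟨hSp, hne⟩)
    · simp [_root_.eraseEntry, h.eq_empty p hSp]
  nonempty p hp := ((hS' p).1 hp).2
  subset_Icc p k hk := by
    obtain ⟨hkn, hk⟩ := mem_erase.1 hk
    have := mem_Icc.1 (h.subset_Icc p hk)
    exact mem_Icc.2 ⟨this.1, by omega⟩
  existsUnique k hk := by
    obtain ⟨hk₁, hk₂⟩ := mem_Icc.1 hk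
    obtain ⟨p, hp, huniq⟩ := h.existsUnique k (mem_Icc.2 ⟨hk₁, by omega⟩)
    exact ⟨p, mem_erase.2 ⟨by omega, hp⟩, fun q hq => huniq q (mem_of_mem_erase hq)⟩
  lt p q hp hq hpq h₁ h₂ a ha b hb :=
    h.lt p q ((hS' p).1 hp).1 ((hS' q).1 hq).1 hpq h₁ h₂ a (mem_of_mem_erase ha) b
      (mem_of_mem_erase hb)

theorem erase_eq_self (h : IsSVTOn S n T) {c p : ℕ × ℕ} (hc : n ∈ T c) (hp : p ≠ c) :
    (T p).erase n = T p :=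
  erase_eq_of_notMem fun hn => hp (h.eq_of_mem hn hc)

theorem eraseEntry_of_ne_singleton (h : IsSVTOn S (n + 1) T) {c : ℕ × ℕ} (hc : n + 1 ∈ T c)
    (hne : T c ≠ {n + 1}) : IsSVTOn S n (_root_.eraseEntry (n + 1) T) := by
  refine h.eraseEntry fun p => ⟨fun hp => ⟨hp, ?_⟩, And.left⟩
  by_cases hpc : p = c
  · subst hpc
    exact ((nontrivial_iff_ne_singleton hc).2 hne).erase_nonempty
  · rw [h.erase_eq_self hc hpc]
    exact h.nonempty p hp

theorem eraseEntry_of_singleton (h : IsSVTOn S (n + 1) T) {c : ℕ × ℕ} (hc : T c = {n + 1})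
    (hS' : ∀ p, S' p ↔ S p ∧ p ≠ c) : IsSVTOn S' n (_root_.eraseEntry (n + 1) T) := by
  have hmem : n + 1 ∈ T c := by simp [hc]
  refine h.eraseEntry fun p => ?_
  by_cases hpc : p = c
  · subst hpc; simp [hS', hc]
  · rw [hS', h.erase_eq_self hmem hpc]
    exact ⟨fun hp => ⟨hp.1, h.nonempty p hp.1⟩, fun hp => ⟨hp.1, hpc⟩⟩

theorem insertEntry (h : IsSVTOn S' n T) {c : ℕ × ℕ} (hc : IsMaxCell S c)
    (hS : ∀ p, S p ↔ S' p ∨ p = c) : IsSVTOn S (n + 1) (insertEntry (n + 1) c T) where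
  eq_empty p hp := by
    rw [insertEntry_of_ne (by rintro rfl; exact hp hc.1)]
    exact h.eq_empty p fun hp' => hp ((hS p).2 (Or.inl hp'))
  nonempty p hp := by
    by_cases hpc : p = c
    · subst hpc; simp [insertEntry_self]
    · rw [insertEntry_of_ne hpc]
      exact h.nonempty p (((hS p).1 hp).resolve_right hpc)
  subset_Icc p k hk := by
    rcases mem_insertEntry.1 hk with ⟨-, rfl⟩ | hk
    · simp
    · have := mem_Icc.1 (h.subset_Icc p hk)
      exact mem_Icc.2 ⟨this.1, by omega⟩
  existsUnique k hk := by
    by_cases hkn : k = n + 1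
    · subst hkn
      refine ⟨c, mem_insertEntry.2 (Or.inl ⟨rfl, rfl⟩), fun q hq => ?_⟩
      exact (mem_insertEntry.1 hq).elim And.left fun hq => absurd hq (h.succ_notMem q)
    · obtain ⟨hk₁, hk₂⟩ := mem_Icc.1 hk
      obtain ⟨p, hp, huniq⟩ := h.existsUnique k (mem_Icc.2 ⟨hk₁, by omega⟩)
      refine ⟨p, mem_insertEntry.2 (Or.inr hp), fun q hq => ?_⟩
      exact (mem_insertEntry.1 hq).elim (fun hq => absurd hq.2 hkn) (huniq q)
  lt p q hp hq hpq h₁ h₂ a ha b hb := by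
    rcases mem_insertEntry.1 ha with ⟨rfl, rfl⟩ | ha
    · exact absurd (hc.2 q hq h₁ h₂) (Ne.symm hpq)
    rcases mem_insertEntry.1 hb with ⟨-, rfl⟩ | hb
    · have := h.le_of_mem ha; omega
    · exact h.lt p q (h.mem_shape ha) (h.mem_shape hb) hpq h₁ h₂ a ha b hb

theorem insertEntry_of_isMaxCell (h : IsSVTOn S n T) {c : ℕ × ℕ} (hc : IsMaxCell S c) :
    IsSVTOn S (n + 1) (_root_.insertEntry (n + 1) c T) :=
  h.insertEntry hc fun _ => (or_iff_left_of_imp fun hp => hp ▸ hc.1).symm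

end IsSVTOn

theorem isMaxCell_inShape_iff {e t : ℕ} {c : ℕ × ℕ} :
    IsMaxCell (InShape e t 0) c ↔ (c = (0, e + t) ∧ 0 < t) ∨ (c = (1, e) ∧ 0 < e) := by
  constructor
  · rintro ⟨hc, hmax⟩
    obtain ⟨r, j⟩ := c
    simp only [InShape] at hc
    rcases hc with ⟨rfl, h₁, h₂⟩ | ⟨rfl, h₁, h₂⟩
    · have hj := hmax (0, e + t) (by simp [InShape]; omega) le_rfl h₂
      simp only [Prod.mk.injEq, true_and] at hj
      refine Or.inl ⟨by rw [hj], Nat.pos_of_ne_zero fun ht => ?_⟩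
      have := hmax (1, e) (by simp [InShape]; omega) zero_le_one (by omega)
      simp at this
    · have hj := hmax (1, e) (by simp [InShape]; omega) le_rfl h₂
      simp only [Prod.mk.injEq, true_and] at hj
      exact Or.inr ⟨by rw [hj], by omega⟩
  · rintro (⟨rfl, ht⟩ | ⟨rfl, he⟩) <;>
    refine ⟨by simp [InShape]; omega, ?_⟩ <;>
    rintro ⟨r, j⟩ hq h₁ h₂ <;>
    simp only [InShape] at hq h₁ h₂ <;>
    simp only [Prod.mk.injEq] <;>
    omega

namespace IsSVTOn

variable {n e t : ℕ} {T : ℕ × ℕ → Finset ℕ}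

theorem rowEntries_add_rowEntries (h : IsSVTOn (InShape e t 0) n T) :
    rowEntries (e + t) 0 T + rowEntries (e + t) 1 T = n := by
  have := h.sum_card_eq (D := range 2 ×ˢ range (e + t + 1)) (by
    rintro ⟨r, j⟩ hp
    simp only [InShape] at hp
    simp only [mem_product, mem_range]
    omega)
  rwa [sum_product, sum_range_succ, sum_range_one] at this

theorem rowEntries_top_succ (h : IsSVTOn (InShape e t 0) n T) :
    rowEntries (e + t + 1) 0 T = rowEntries (e + t) 0 T := by
  rw [rowEntries_succ, h.eq_empty _ (by simp only [InShape]; omega), card_empty, add_zero]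

theorem notMem_top_of_zero (h : IsSVTOn (InShape e 0 0) n T) : n ∉ T (0, e + 0) := fun hn => by
  rcases isMaxCell_inShape_iff.1 (h.isMaxCell_of_mem hn) with ⟨-, h₀⟩ | ⟨h₁, -⟩
  · exact h₀.false
  · simp at h₁

theorem mem_bottom_of_notMem_top (h : IsSVTOn (InShape e t 0) (n + 1) T)
    (htop : n + 1 ∉ T (0, e + t)) : n + 1 ∈ T (1, e) ∧ 0 < e := by
  obtain ⟨p, hp, -⟩ := h.existsUnique (n + 1) (by simp)
  rcases isMaxCell_inShape_iff.1 (h.isMaxCell_of_mem hp) with ⟨rfl, -⟩ | ⟨rfl, he⟩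
  · exact absurd hp htop
  · exact ⟨hp, he⟩

end IsSVTOn

def svtSet (n t m : ℕ) : Set (ℕ × (ℕ × ℕ → Finset ℕ)) :=
  {x | IsSVTOn (InShape x.1 t 0) n x.2 ∧ rowEntries (x.1 + t) 0 x.2 = m}

theorem mem_svtSet {n t m : ℕ} {x : ℕ × (ℕ × ℕ → Finset ℕ)} :
    x ∈ svtSet n t m ↔ IsSVTOn (InShape x.1 t 0) n x.2 ∧ rowEntries (x.1 + t) 0 x.2 = m :=
  Iff.rfl

theorem add_le_of_mem_svtSet {n t m : ℕ} {x : ℕ × (ℕ × ℕ → Finset ℕ)} (hx : x ∈ svtSet n t m) :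
    x.1 + t ≤ m :=
  hx.2 ▸ hx.1.le_rowEntries le_rfl fun _ h₁ h₂ => Or.inl ⟨rfl, h₁, h₂⟩

theorem fst_eq_zero_iff_of_mem_svtSet {n t m : ℕ} {x : ℕ × (ℕ × ℕ → Finset ℕ)}
    (hx : x ∈ svtSet n t m) : x.1 = 0 ↔ m = n := by
  obtain ⟨e, T⟩ := x
  obtain ⟨h, rfl⟩ := hx
  dsimp only at h ⊢
  have hsum := h.rowEntries_add_rowEntries
  have hrow₁ := h.le_rowEntries (r := 1) (k := e) (M := e + t) (by omega)
    fun _ h₁ h₂ => Or.inr ⟨rfl, h₁, h₂⟩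
  refine ⟨fun he => ?_, fun hm => by omega⟩
  subst he
  have : rowEntries (0 + t) 1 T = 0 :=
    sum_eq_zero fun j _ => by rw [h.eq_empty (1, j) (by simp only [InShape]; omega), card_empty]
  omega

theorem svtSet_zero_right {n : ℕ} (hn : 1 ≤ n) (t : ℕ) : svtSet n t 0 = ∅ := by
  refine Set.eq_empty_of_forall_notMem fun x hx => ?_
  obtain ⟨p, hp, -⟩ := hx.1.existsUnique 1 (mem_Icc.2 ⟨le_rfl, hn⟩)
  have hcell := hx.1.mem_shape hp
  have := add_le_of_mem_svtSet hx
  simp only [InShape] at hcell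
  omega

theorem svtSet_finite (n t m : ℕ) : (svtSet n t m).Finite := by
  set D := range 2 ×ˢ range (m + 1)
  have hsub : svtSet n t m ⊆
      Set.Iic m ×ˢ {T | ∀ p, T p ⊆ Icc 1 n ∧ (p ∉ D → T p = ∅)} := by
    rintro ⟨e, T⟩ hx
    have hle := add_le_of_mem_svtSet hx
    refine ⟨by simp only [Set.mem_Iic]; omega, fun p => ⟨hx.1.subset_Icc p, fun hp => ?_⟩⟩
    refine hx.1.eq_empty p fun hS => hp ?_
    obtain ⟨r, j⟩ := p
    simp only [InShape] at hS
    simp only [D, mem_product, mem_range]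
    omega
  refine ((Set.finite_Iic m).prod ?_).subset hsub
  refine Set.Finite.of_finite_image (f := fun T (p : D) => T p) ?_ ?_
  · refine (Set.Finite.pi (t := fun _ => ((Icc 1 n).powerset : Set (Finset ℕ)))
      fun _ => finite_toSet _).subset ?_
    rintro _ ⟨T, hT, rfl⟩ p -
    exact mem_powerset.2 (hT p).1
  · intro T₁ h₁ T₂ h₂ heq
    funext p
    by_cases hp : p ∈ D
    · exact congrFun heq ⟨p, hp⟩
    · rw [(h₁ p).2 hp, (h₂ p).2 hp]

theorem isSVTOn_zero_iff {S : ℕ × ℕ → Prop} {T : ℕ × ℕ → Finset ℕ} :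
    IsSVTOn S 0 T ↔ (∀ p, ¬ S p) ∧ T = fun _ => ∅ := by
  refine ⟨fun h => ⟨fun p hp => ?_, funext fun p => ?_⟩, ?_⟩
  · obtain ⟨k, hk⟩ := h.nonempty p hp
    simpa using h.subset_Icc p hk
  · exact subset_empty.1 (by simpa using h.subset_Icc p)
  · rintro ⟨hS, rfl⟩
    exact ⟨fun _ _ => rfl, fun p hp => (hS p hp).elim, fun _ => empty_subset _, by simp,
      fun p _ hp => (hS p hp).elim⟩

theorem ncard_svtSet_zero_left (t m : ℕ) :
    (svtSet 0 t m).ncard = if t = 0 ∧ m = 0 then 1 else 0 := by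
  have hshape : ∀ e, (∀ p, ¬ InShape e t 0 p) ↔ e = 0 ∧ t = 0 := fun e =>
    ⟨fun h => by have := h (0, 1); simp [InShape] at this; omega,
      fun h p => by simp only [InShape]; omega⟩
  have hmem : ∀ e T, (e, T) ∈ svtSet 0 t m ↔ e = 0 ∧ t = 0 ∧ T = (fun _ => ∅) ∧ m = 0 := by
    intro e T
    rw [mem_svtSet, isSVTOn_zero_iff, hshape]
    constructor
    · rintro ⟨⟨⟨rfl, rfl⟩, rfl⟩, rfl⟩
      simp [rowEntries]
    · rintro ⟨rfl, rfl, rfl, rfl⟩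
      simp [rowEntries]
  split_ifs with h
  · rw [Set.ncard_eq_one]
    exact ⟨(0, fun _ => ∅), Set.ext fun ⟨e, T⟩ => (hmem e T).trans (by simp [h])⟩
  · rw [show svtSet 0 t m = ∅ from Set.eq_empty_of_forall_notMem fun ⟨e, T⟩ hx =>
      h ⟨((hmem e T).1 hx).2.1, ((hmem e T).1 hx).2.2.2⟩, Set.ncard_empty]

theorem ncard_svtSet_topShared {n t m : ℕ} (ht : 1 ≤ t) :
    ((svtSet (n + 1) t (m + 1) ∩ {x | n + 1 ∈ x.2 (0, x.1 + t)}) \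
      {x | x.2 (0, x.1 + t) = {n + 1}}).ncard = (svtSet n t m).ncard := by
  symm
  refine (Set.InvOn.bijOn (f := fun x => (x.1, insertEntry (n + 1) (0, x.1 + t) x.2))
    (f' := fun x => (x.1, eraseEntry (n + 1) x.2)) ⟨?_, ?_⟩ ?_ ?_).ncard_eq
  · rintro ⟨e, T⟩ ⟨hT, -⟩
    simp [eraseEntry_insertEntry hT.succ_notMem]
  · rintro ⟨e, T⟩ ⟨⟨⟨hT, -⟩, hc⟩, -⟩
    simp [insertEntry_eraseEntry hc fun _ hp => hT.eq_of_mem hp hc]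
  · rintro ⟨e, T⟩ ⟨hT, hrow⟩
    have hc : IsMaxCell (InShape e t 0) (0, e + t) := isMaxCell_inShape_iff.2 (Or.inl ⟨rfl, ht⟩)
    obtain ⟨k, hk⟩ := hT.nonempty _ hc.1
    refine ⟨⟨⟨hT.insertEntry_of_isMaxCell hc, ?_⟩, mem_insertEntry.2 (Or.inl ⟨rfl, rfl⟩)⟩,
      insertEntry_self_ne_singleton hk (hT.succ_notMem _ <| · ▸ hk)⟩
    show rowEntries (e + t) 0 (insertEntry (n + 1) (0, e + t) T) = m + 1
    rw [rowEntries_insertEntry le_rfl (hT.succ_notMem _), hrow]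
  · rintro ⟨e, T⟩ ⟨⟨⟨hT, hrow⟩, hc⟩, hne⟩
    refine ⟨hT.eraseEntry_of_ne_singleton hc hne, ?_⟩
    have := rowEntries_insertEntry (M := e + t) (r := 0) (a := n + 1)
      (T := eraseEntry (n + 1) T) le_rfl (by simp [eraseEntry])
    rw [insertEntry_eraseEntry hc fun _ hp => hT.eq_of_mem hp hc, hrow] at this
    exact (Nat.add_right_cancel this).symm

theorem ncard_svtSet_topAlone (n t m : ℕ) :
    (svtSet (n + 1) (t + 1) (m + 1) ∩ {x | n + 1 ∈ x.2 (0, x.1 + (t + 1))} ∩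
      {x | x.2 (0, x.1 + (t + 1)) = {n + 1}}).ncard = (svtSet n t m).ncard := by
  symm
  refine (Set.InvOn.bijOn (f := fun x => (x.1, insertEntry (n + 1) (0, x.1 + (t + 1)) x.2))
    (f' := fun x => (x.1, eraseEntry (n + 1) x.2)) ⟨?_, ?_⟩ ?_ ?_).ncard_eq
  · rintro ⟨e, T⟩ ⟨hT, -⟩
    simp [eraseEntry_insertEntry hT.succ_notMem]
  · rintro ⟨e, T⟩ ⟨⟨⟨hT, -⟩, hc⟩, -⟩
    simp [insertEntry_eraseEntry hc fun _ hp => hT.eq_of_mem hp hc]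
  · rintro ⟨e, T⟩ ⟨hT, hrow⟩
    have hc : IsMaxCell (InShape e (t + 1) 0) (0, e + (t + 1)) :=
      isMaxCell_inShape_iff.2 (Or.inl ⟨rfl, t.succ_pos⟩)
    have hempty : T (0, e + (t + 1)) = ∅ := hT.eq_empty _ (by simp only [InShape]; omega)
    have hS : ∀ p, InShape e (t + 1) 0 p ↔ InShape e t 0 p ∨ p = (0, e + (t + 1)) := by
      rintro ⟨r, j⟩; simp only [InShape, Prod.mk.injEq]; omega
    refine ⟨⟨⟨hT.insertEntry hc hS, ?_⟩, mem_insertEntry.2 (Or.inl ⟨rfl, rfl⟩)⟩, ?_⟩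
    · show rowEntries (e + (t + 1)) 0 (insertEntry (n + 1) (0, e + (t + 1)) T) = m + 1
      rw [rowEntries_insertEntry le_rfl (hT.succ_notMem _), ← add_assoc, hT.rowEntries_top_succ,
        hrow]
    · show insertEntry (n + 1) (0, e + (t + 1)) T (0, e + (t + 1)) = {n + 1}
      rw [insertEntry_self, hempty, insert_empty]
  · rintro ⟨e, T⟩ ⟨⟨⟨hT, hrow⟩, hc⟩, hsingle⟩
    have hT' := hT.eraseEntry_of_singleton (S' := InShape e t 0) hsingle fun p => by
      obtain ⟨r, j⟩ := p; simp only [InShape, Prod.mk.injEq, ne_eq]; omega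
    refine ⟨hT', ?_⟩
    have := rowEntries_insertEntry (M := e + (t + 1)) (r := 0) (a := n + 1)
      (T := eraseEntry (n + 1) T) le_rfl (by simp [eraseEntry])
    rw [insertEntry_eraseEntry hc fun _ hp => hT.eq_of_mem hp hc, hrow, ← add_assoc,
      hT'.rowEntries_top_succ] at this
    exact (Nat.add_right_cancel this).symm

theorem ncard_svtSet_bottomShared (n t m : ℕ) :
    ((svtSet (n + 1) t m \ {x | n + 1 ∈ x.2 (0, x.1 + t)}) \
      {x | x.2 (1, x.1) = {n + 1}}).ncard = {y ∈ svtSet n t m | y.1 ≠ 0}.ncard := by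
  symm
  refine (Set.InvOn.bijOn (f := fun x => (x.1, insertEntry (n + 1) (1, x.1) x.2))
    (f' := fun x => (x.1, eraseEntry (n + 1) x.2)) ⟨?_, ?_⟩ ?_ ?_).ncard_eq
  · rintro ⟨e, T⟩ ⟨⟨hT, -⟩, -⟩
    simp [eraseEntry_insertEntry hT.succ_notMem]
  · rintro ⟨e, T⟩ ⟨⟨⟨hT, -⟩, htop⟩, -⟩
    have hbot := (hT.mem_bottom_of_notMem_top htop).1
    simp [insertEntry_eraseEntry hbot fun _ hp => hT.eq_of_mem hp hbot]
  · rintro ⟨e, T⟩ ⟨⟨hT, hrow⟩, he⟩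
    have hc : IsMaxCell (InShape e t 0) (1, e) :=
      isMaxCell_inShape_iff.2 (Or.inr ⟨rfl, Nat.pos_of_ne_zero he⟩)
    obtain ⟨k, hk⟩ := hT.nonempty _ hc.1
    refine ⟨⟨⟨hT.insertEntry_of_isMaxCell hc, ?_⟩, fun htop => ?_⟩,
      insertEntry_self_ne_singleton hk (hT.succ_notMem _ <| · ▸ hk)⟩
    · exact (rowEntries_insertEntry_of_ne zero_ne_one.symm).trans hrow
    · replace htop : n + 1 ∈ insertEntry (n + 1) (1, e) T (0, e + t) := htop
      rw [insertEntry_of_ne (by simp)] at htop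
      exact hT.succ_notMem _ htop
  · rintro ⟨e, T⟩ ⟨⟨⟨hT, hrow⟩, htop⟩, hne⟩
    obtain ⟨hbot, he⟩ := hT.mem_bottom_of_notMem_top htop
    refine ⟨⟨hT.eraseEntry_of_ne_singleton hbot hne, ?_⟩, he.ne'⟩
    rw [← insertEntry_eraseEntry hbot fun _ hp => hT.eq_of_mem hp hbot] at hrow
    exact (rowEntries_insertEntry_of_ne zero_ne_one.symm).symm.trans hrow

theorem ncard_svtSet_bottomAlone (n t m : ℕ) :
    ((svtSet (n + 1) t m \ {x | n + 1 ∈ x.2 (0, x.1 + t)}) ∩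
      {x | x.2 (1, x.1) = {n + 1}}).ncard = (svtSet n (t + 1) m).ncard := by
  symm
  refine (Set.InvOn.bijOn (f := fun x => (x.1 + 1, insertEntry (n + 1) (1, x.1 + 1) x.2))
    (f' := fun x => (x.1 - 1, eraseEntry (n + 1) x.2)) ⟨?_, ?_⟩ ?_ ?_).ncard_eq
  · rintro ⟨e, T⟩ ⟨hT, -⟩
    simp [eraseEntry_insertEntry hT.succ_notMem]
  · rintro ⟨e, T⟩ ⟨⟨⟨hT, -⟩, htop⟩, -⟩
    obtain ⟨hbot, he⟩ := hT.mem_bottom_of_notMem_top htop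
    obtain ⟨e, rfl⟩ : ∃ e', e = e' + 1 := ⟨e - 1, by omega⟩
    simp [insertEntry_eraseEntry hbot fun _ hp => hT.eq_of_mem hp hbot]
  · rintro ⟨e, T⟩ ⟨hT, hrow⟩
    have hc : IsMaxCell (InShape (e + 1) t 0) (1, e + 1) :=
      isMaxCell_inShape_iff.2 (Or.inr ⟨rfl, e.succ_pos⟩)
    have hempty : T (1, e + 1) = ∅ := hT.eq_empty _ (by simp only [InShape]; omega)
    have hS : ∀ p, InShape (e + 1) t 0 p ↔ InShape e (t + 1) 0 p ∨ p = (1, e + 1) := by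
      rintro ⟨r, j⟩; simp only [InShape, Prod.mk.injEq]; omega
    refine ⟨⟨⟨hT.insertEntry hc hS, ?_⟩, fun htop => ?_⟩, ?_⟩
    · show rowEntries (e + 1 + t) 0 (insertEntry (n + 1) (1, e + 1) T) = m
      rw [rowEntries_insertEntry_of_ne zero_ne_one.symm, show e + 1 + t = e + (t + 1) by omega,
        hrow]
    · replace htop : n + 1 ∈ insertEntry (n + 1) (1, e + 1) T (0, e + 1 + t) := htop
      rw [insertEntry_of_ne (by simp)] at htop
      exact hT.succ_notMem _ htop
    · show insertEntry (n + 1) (1, e + 1) T (1, e + 1) = {n + 1}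
      rw [insertEntry_self, hempty, insert_empty]
  · rintro ⟨e, T⟩ ⟨⟨⟨hT, hrow⟩, htop⟩, hsingle⟩
    obtain ⟨hbot, he⟩ := hT.mem_bottom_of_notMem_top htop
    obtain ⟨e, rfl⟩ : ∃ e', e = e' + 1 := ⟨e - 1, by omega⟩
    refine ⟨hT.eraseEntry_of_singleton hsingle fun p => ?_, ?_⟩
    · obtain ⟨r, j⟩ := p; simp only [InShape, Prod.mk.injEq, ne_eq]; omega
    · rw [← insertEntry_eraseEntry hbot fun _ hp => hT.eq_of_mem hp hbot,
        rowEntries_insertEntry_of_ne zero_ne_one.symm] at hrow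
      show rowEntries (e + 1 - 1 + (t + 1)) 0 (eraseEntry (n + 1) T) = m
      rw [show e + 1 - 1 + (t + 1) = e + 1 + t by omega, hrow]

theorem ncard_sep_svtSet_fst_ne_zero (n t m : ℕ) :
    {y ∈ svtSet n t m | y.1 ≠ 0}.ncard = if m = n then 0 else (svtSet n t m).ncard := by
  split_ifs with h
  · rw [show {y ∈ svtSet n t m | y.1 ≠ 0} = ∅ from Set.eq_empty_of_forall_notMem
      fun y hy => hy.2 ((fst_eq_zero_iff_of_mem_svtSet hy.1).2 h), Set.ncard_empty]
  · exact congrArg _ (Set.sep_eq_self_iff_mem_true.2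
      fun y hy h0 => h ((fst_eq_zero_iff_of_mem_svtSet hy).1 h0))

theorem ncard_svtSet_succ (n : ℕ) {m : ℕ} (hm : 1 ≤ m) (t : ℕ) :
    (svtSet (n + 1) t m).ncard
      = (if 1 ≤ t then (svtSet n t (m - 1)).ncard + (svtSet n (t - 1) (m - 1)).ncard else 0)
        + (if m = n then 0 else (svtSet n t m).ncard) + (svtSet n (t + 1) m).ncard := by
  obtain ⟨m, rfl⟩ : ∃ m', m = m' + 1 := ⟨m - 1, by omega⟩
  have hfin := svtSet_finite (n + 1) t (m + 1)
  rw [← Set.ncard_inter_add_ncard_sdiff_eq_ncard _ {x | n + 1 ∈ x.2 (0, x.1 + t)} hfin,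
    ← Set.ncard_inter_add_ncard_sdiff_eq_ncard (_ \ _) {x | x.2 (1, x.1) = {n + 1}} hfin.sdiff,
    ncard_svtSet_bottomAlone, ncard_svtSet_bottomShared, ncard_sep_svtSet_fst_ne_zero,
    Nat.add_sub_cancel]
  rcases t with _ | t
  · rw [show svtSet (n + 1) 0 (m + 1) ∩ {x | n + 1 ∈ x.2 (0, x.1 + 0)} = ∅ from
      Set.eq_empty_of_forall_notMem fun x hx => hx.1.1.notMem_top_of_zero hx.2, Set.ncard_empty]
    simp only [if_neg (Nat.not_succ_le_zero 0)]
    omega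
  · rw [← Set.ncard_inter_add_ncard_sdiff_eq_ncard (_ ∩ _) {x | x.2 (0, x.1 + (t + 1)) = {n + 1}}
      (hfin.inter_of_left _), ncard_svtSet_topAlone, ncard_svtSet_topShared (by omega),
      if_pos (show 1 ≤ t + 1 by omega), Nat.add_sub_cancel]
    omega

theorem ncard_svtSet_eq_countFormula {n : ℕ} (hn : 1 ≤ n) (m t : ℕ) :
    ((svtSet n t m).ncard : ℚ) = countFormula n m t := by
  induction n, hn using Nat.le_induction generalizing m t with
  | base =>
    rcases Nat.eq_zero_or_pos m with rfl | hm
    · rw [svtSet_zero_right le_rfl, Set.ncard_empty, Nat.cast_zero,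
        countFormula_zero_middle le_rfl]
    rw [ncard_svtSet_succ 0 hm t, countFormula_one]
    simp [ncard_svtSet_zero_left, hm.ne']
    split_ifs <;> norm_num <;> omega
  | succ n hn ih =>
    rcases Nat.eq_zero_or_pos m with rfl | hm
    · rw [svtSet_zero_right (by omega), Set.ncard_empty, Nat.cast_zero,
        countFormula_zero_middle (by omega)]
    rw [ncard_svtSet_succ n hm t, countFormula_succ hn hm t]
    push_cast [ih]
    rfl

end Tableaux

theorem count_svt_firstRow_general (n m t : ℕ) (hn : 1 ≤ n) :
    (Nat.card {p : ℕ × (ℕ × ℕ → Finset ℕ) //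
        IsSVT n p.1 t 0 p.2 ∧ rowEntries (p.1 + t) 0 p.2 = m} : ℚ) =
      (if m = n then 1 else 0) * (zchoose ((n : ℤ) - 1) ((t : ℤ) - 1) : ℚ)
        + (if m < n then 1 else 0) * ((t : ℚ) / ((n : ℚ) - 1))
            * (zchoose (n : ℤ) (m : ℤ) : ℚ) * (zchoose ((n : ℤ) - 1) ((m : ℤ) - t - 1) : ℚ)
        + (1 / ((n : ℚ) - 1)) * (zchoose ((n : ℤ) - 1) (m : ℤ) : ℚ)
            * (zchoose ((n : ℤ) - 1) ((m : ℤ) - t - 1) : ℚ) := by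
  simp only [isSVT_iff_isSVTOn]
  exact (congrArg Nat.cast (Nat.card_coe_set_eq (svtSet n t m))).trans
    (ncard_svtSet_eq_countFormula hn m t)

/-- The number of set-valued standard tableaux of shape `(e+t,e)`, for some
non-negative integer `e`, with `m` entries in the first row and `n` entries in total
equals `[m=n]·C(n-1,t-1) + [m<n]·(t/(n-1))·C(n,m)·C(n-1,m-t-1)
+ (1/(n-1))·C(n-1,m)·C(n-1,m-t-1)`. -/
theorem count_svt_firstRow (n m t : ℕ) (hn : 1 ≤ n) (hm : 1 ≤ m) :
    (Nat.card {p : ℕ × (ℕ × ℕ → Finset ℕ) //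
        IsSVT n p.1 t 0 p.2 ∧ rowEntries (p.1 + t) 0 p.2 = m} : ℚ) =
      (if m = n then 1 else 0) * (zchoose ((n : ℤ) - 1) ((t : ℤ) - 1) : ℚ)
        + (if m < n then 1 else 0) * ((t : ℚ) / ((n : ℚ) - 1))
            * (zchoose (n : ℤ) (m : ℤ) : ℚ) * (zchoose ((n : ℤ) - 1) ((m : ℤ) - t - 1) : ℚ)
        + (1 / ((n : ℚ) - 1)) * (zchoose ((n : ℤ) - 1) (m : ℤ) : ℚ)
            * (zchoose ((n : ℤ) - 1) ((m : ℤ) - t - 1) : ℚ) :=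
  count_svt_firstRow_general n m t hn
end

section
/- Let f(z) be a formal Laurent/power series with f(0)=0 and f'(0)≠0, let F(z) be its compositional inverse, and let g(z) be a formal Laurent series with only finitely many negative-power terms. Then for every integer n, the coefficient of z^n in g(F(z)) equals the coefficient of z^{-1} in g(z)·f(z)^{-n-1}·f'(z). -/
/-!
Write `f = X u` and `F = X v` with units `u`, `v`. The heart of the matter is the change of
variables for residues: for every power series `w`, `res (w(f) f^(-N-1) f') = [X^N] w`.
By linearity it is enough to take `w = X^j`; then `f^(j-N-1) f'` is the derivative of
`f^(j-N) / (j-N)` when `j ≠ N`, so its residue vanishes, while `res (f⁻¹ f') = 1`.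
Since `F(f) = X`, the power series `w = v^(-m) h(F)` satisfies `w(f) = u^m h`, and the residue
formula for this `w` turns the right-hand side into `[X^(n+m)] w`, which is the left-hand side.
-/

/-- Composition `g(F(z))` of formal power series (meaningful when `F` has zero
constant term): the coefficient of `z^n` is `Σ_{k ≤ n} g_k · [z^n] F^k`. -/
noncomputable def pcomp {R : Type*} [CommRing R] (g F : PowerSeries R) : PowerSeries R :=
  PowerSeries.mk fun n =>
    ∑ k ∈ Finset.range (n + 1), PowerSeries.coeff k g * PowerSeries.coeff n (F ^ k)

/-- The formal derivative of a power series. -/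
noncomputable def pderiv {R : Type*} [CommRing R] (f : PowerSeries R) : PowerSeries R :=
  PowerSeries.mk fun n => (n + 1 : R) * PowerSeries.coeff (n + 1) f

open scoped LaurentSeries

namespace PowerSeries

section CommRing

variable {R : Type*} [CommRing R]

theorem pcomp_eq_subst (g : R⟦X⟧) {F : R⟦X⟧} (hF : constantCoeff F = 0) :
    pcomp g F = g.subst F := by
  ext n
  rw [pcomp, coeff_mk, coeff_subst' (HasSubst.of_constantCoeff_zero' hF),
    finsum_eq_sum_of_support_subset _ (s := Finset.range (n + 1))]
  · simp only [smul_eq_mul]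
  · intro k hk
    rw [Function.mem_support] at hk
    rw [Finset.coe_range, Set.mem_Iio]
    by_contra! hnk
    exact hk (by rw [X_pow_dvd_iff.mp (pow_dvd_pow_of_dvd (X_dvd_iff.mpr hF) k) n (by omega),
      smul_zero])

theorem coeff_one_pcomp {g : R⟦X⟧} (hg : coeff 0 g = 0) (F : R⟦X⟧) :
    coeff 1 (pcomp g F) = coeff 1 g * coeff 1 F := by
  simp [pcomp, Finset.sum_range_succ, hg]

theorem pderiv_eq_derivative (f : R⟦X⟧) : pderiv f = d⁄dX R f := by
  ext n
  rw [pderiv, coeff_mk, coeff_derivative, mul_comm]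

theorem exists_eq_X_mul_unit {f : R⟦X⟧} (h0 : coeff 0 f = 0) (h1 : IsUnit (coeff 1 f)) :
    ∃ u : R⟦X⟧ˣ, f = X * (u : R⟦X⟧) := by
  obtain ⟨g, rfl⟩ : X ∣ f := X_dvd_iff.mpr (by rwa [← coeff_zero_eq_constantCoeff_apply])
  rw [coeff_succ_X_mul, coeff_zero_eq_constantCoeff_apply] at h1
  exact ⟨(isUnit_iff_constantCoeff.mpr h1).unit, rfl⟩

theorem subst_unit_inv_eq_of_subst_X_mul_unit_eq_X {u v : R⟦X⟧ˣ}
    (h : (X * (v : R⟦X⟧)).subst (X * (u : R⟦X⟧)) = X) :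
    ((v⁻¹ : R⟦X⟧ˣ) : R⟦X⟧).subst (X * (u : R⟦X⟧)) = u := by
  have hu : HasSubst (X * (u : R⟦X⟧)) := HasSubst.of_constantCoeff_zero' (by simp)
  rw [subst_mul hu, subst_X hu, mul_assoc] at h
  have hv : (u : R⟦X⟧) * (v : R⟦X⟧).subst (X * (u : R⟦X⟧)) = 1 :=
    X_mul_cancel (by rw [h, mul_one])
  have hvinv : ((v⁻¹ : R⟦X⟧ˣ) : R⟦X⟧).subst (X * (u : R⟦X⟧)) *
      (v : R⟦X⟧).subst (X * (u : R⟦X⟧)) = 1 := by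
    rw [← coe_substAlgHom hu, ← map_mul, ← Units.val_mul, inv_mul_cancel, Units.val_one, map_one]
  linear_combination (u : R⟦X⟧) * hvinv - ((v⁻¹ : R⟦X⟧ˣ) : R⟦X⟧).subst (X * (u : R⟦X⟧)) * hv

theorem coeff_X_mul_derivative (P : R⟦X⟧) (d : ℕ) :
    coeff d (X * d⁄dX R P) = d * coeff d P := by
  cases d with
  | zero => simp
  | succ e => rw [coeff_succ_X_mul, coeff_derivative, mul_comm]; push_cast; ring

theorem coeff_zpow_neg_sub_one_mul_derivative [IsAddTorsionFree R] (u : R⟦X⟧ˣ) (d : ℕ) :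
    coeff d (((u ^ (-(d : ℤ) - 1) : R⟦X⟧ˣ) : R⟦X⟧) * d⁄dX R (X * (u : R⟦X⟧))) =
      if d = 0 then 1 else 0 := by
  set w : R⟦X⟧ := ↑u⁻¹
  have hwu : w * u = 1 := by rw [← Units.val_mul, inv_mul_cancel, Units.val_one]
  have hpow : (↑(u ^ (-(d : ℤ) - 1)) : R⟦X⟧) = w ^ (d + 1) := by
    rw [show -(d : ℤ) - 1 = -((d + 1 : ℕ) : ℤ) by push_cast; ring, zpow_neg, zpow_natCast,
      ← inv_pow, Units.val_pow_eq_pow_val]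
  have hderiv : d⁄dX R (X * (u : R⟦X⟧)) = (u : R⟦X⟧) + X * d⁄dX R u := by
    rw [Derivation.leibniz, derivative_X, smul_eq_mul, smul_eq_mul, mul_one, add_comm]
  rw [hpow, hderiv]
  split_ifs with hd
  · subst hd
    simp [mul_add, ← mul_assoc, hwu]
  · obtain ⟨e, rfl⟩ := Nat.exists_eq_succ_of_ne_zero hd
    -- `d w^(d+1) f' = d w^d - X (w^d)'`, and `[X^d]` kills the right-hand side.
    have key : ((e + 1 : ℕ) : R⟦X⟧) *
        (w ^ (e + 1 + 1) * ((u : R⟦X⟧) + X * d⁄dX R (u : R⟦X⟧))) =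
          ((e + 1 : ℕ) : R⟦X⟧) * w ^ (e + 1) - X * d⁄dX R (w ^ (e + 1)) := by
      rw [derivative_pow, derivative_inv]
      simp only [Nat.add_sub_cancel]
      linear_combination ((e + 1 : ℕ) : R⟦X⟧) * w ^ (e + 1) * hwu
    have hcoeff := congr_arg (coeff (e + 1)) key
    rw [map_sub, coeff_X_mul_derivative, ← map_natCast (C (R := R)), coeff_C_mul, coeff_C_mul,
      sub_self, ← nsmul_eq_mul] at hcoeff
    exact (nsmul_eq_zero_iff_right (Nat.succ_ne_zero e)).mp hcoeff

theorem coeff_X_mul_unit_pow_mul_zpow_mul_derivative [IsAddTorsionFree R] (u : R⟦X⟧ˣ)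
    (j a : ℕ) :
    coeff a ((X * (u : R⟦X⟧)) ^ j * ((u ^ (-(a : ℤ) - 1) : R⟦X⟧ˣ) : R⟦X⟧) *
      d⁄dX R (X * (u : R⟦X⟧))) = if j = a then 1 else 0 := by
  rw [mul_pow, mul_assoc, mul_assoc, coeff_X_pow_mul']
  by_cases hja : j ≤ a
  · obtain ⟨d, rfl⟩ := Nat.exists_eq_add_of_le hja
    rw [if_pos hja, Nat.add_sub_cancel_left, ← mul_assoc, ← Units.val_pow_eq_pow_val,
      ← Units.val_mul, ← zpow_natCast, ← zpow_add, show (j : ℤ) + (-((j + d : ℕ) : ℤ) - 1) =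
        -(d : ℤ) - 1 by push_cast; ring, coeff_zpow_neg_sub_one_mul_derivative]
    simp
  · rw [if_neg hja, if_neg (by omega)]

theorem coeff_subst_X_mul_unit_mul_zpow_mul_derivative [IsAddTorsionFree R] (u : R⟦X⟧ˣ)
    (w : R⟦X⟧) (a : ℕ) :
    coeff a (w.subst (X * (u : R⟦X⟧)) * ((u ^ (-(a : ℤ) - 1) : R⟦X⟧ˣ) : R⟦X⟧) *
      d⁄dX R (X * (u : R⟦X⟧))) = coeff a w := by
  set f : R⟦X⟧ := X * (u : R⟦X⟧)
  set G : R⟦X⟧ := ((u ^ (-(a : ℤ) - 1) : R⟦X⟧ˣ) : R⟦X⟧) * d⁄dX R f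
  have hf : HasSubst f := HasSubst.of_constantCoeff_zero' (by simp [f])
  -- Only the terms `w_j f^j` with `j ≤ a` can contribute to `[X^a]`.
  have htail : ∀ s : R⟦X⟧, coeff a ((X ^ (a + 1) * s).subst f * G) = 0 := by
    intro s
    rw [subst_mul hf, subst_pow hf, subst_X hf, mul_pow, mul_assoc, mul_assoc, coeff_X_pow_mul',
      if_neg (by omega)]
  have hhead : (trunc (a + 1) w : R⟦X⟧).subst f =
      ∑ j ∈ Finset.range (a + 1), C (coeff j w) * f ^ j := by
    rw [subst_coe hf, Polynomial.aeval_def, eval₂_trunc_eq_sum_range]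
    rfl
  conv_lhs => rw [mul_assoc, eq_X_pow_mul_shift_add_trunc (a + 1) w, subst_add hf, add_mul,
    map_add, htail, zero_add, hhead, Finset.sum_mul, map_sum]
  simp only [mul_assoc, coeff_C_mul]
  simp only [← mul_assoc (f ^ _), f, coeff_X_mul_unit_pow_mul_zpow_mul_derivative, mul_ite,
    mul_one, mul_zero, Finset.sum_ite_eq', Finset.mem_range, Nat.lt_succ_self, if_true]

end CommRing

section Field

variable {K : Type*} [Field K]

theorem coe_unit_zpow (u : K⟦X⟧ˣ) (t : ℤ) :
    (((u ^ t : K⟦X⟧ˣ) : K⟦X⟧) : K⸨X⸩) = ((u : K⟦X⟧) : K⸨X⸩) ^ t := by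
  have h := congr_arg Units.val
    (map_zpow (Units.map (HahnSeries.ofPowerSeries ℤ K : K⟦X⟧ →* K⸨X⸩)) u t)
  rwa [Units.val_zpow_eq_zpow_val, Units.coe_map, Units.coe_map] at h

theorem coe_X_mul_unit_zpow (u : K⟦X⟧ˣ) (t : ℤ) :
    ((X * (u : K⟦X⟧) : K⟦X⟧) : K⸨X⸩) ^ t =
      HahnSeries.single t 1 * (((u ^ t : K⟦X⟧ˣ) : K⟦X⟧) : K⸨X⸩) := by
  rw [coe_mul, mul_zpow, coe_X, ← RatFunc.single_zpow, coe_unit_zpow]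

theorem coe_X_mul_unit_zpow_neg_add (u : K⟦X⟧ˣ) (a : K⟦X⟧) (m : ℕ) (t : ℤ) :
    (((u : K⟦X⟧) ^ m * a : K⟦X⟧) : K⸨X⸩) *
        ((X * (u : K⟦X⟧) : K⟦X⟧) : K⸨X⸩) ^ (-(m : ℤ) + t) =
      ((X : K⟦X⟧) : K⸨X⸩) ^ (-(m : ℤ)) * (a : K⸨X⸩) * ((X * (u : K⟦X⟧) : K⟦X⟧) : K⸨X⸩) ^ t := by
  have hX : ((X : K⟦X⟧) : K⸨X⸩) ≠ 0 :=
    (map_ne_zero_iff _ HahnSeries.ofPowerSeries_injective).mpr X_ne_zero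
  have hu : ((u : K⟦X⟧) : K⸨X⸩) ≠ 0 :=
    (map_ne_zero_iff _ HahnSeries.ofPowerSeries_injective).mpr u.ne_zero
  rw [coe_mul, coe_pow, coe_mul, zpow_add₀ (mul_ne_zero hX hu), mul_zpow, zpow_neg, zpow_natCast,
    zpow_neg, zpow_natCast]
  field_simp

theorem coeff_coe_subst_mul_zpow_mul_derivative [CharZero K] (u : K⟦X⟧ˣ) (w : K⟦X⟧) (N : ℤ) :
    (((w.subst (X * (u : K⟦X⟧)) : K⟦X⟧) : K⸨X⸩) *
        ((X * (u : K⟦X⟧) : K⟦X⟧) : K⸨X⸩) ^ (-N - 1) *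
      ((d⁄dX K (X * (u : K⟦X⟧)) : K⟦X⟧) : K⸨X⸩)).coeff (-1) = (w : K⸨X⸩).coeff N := by
  rw [coe_X_mul_unit_zpow, mul_left_comm, mul_assoc, ← coe_mul, ← coe_mul, mul_assoc,
    HahnSeries.coeff_single_mul, one_mul, show (-1 : ℤ) - (-N - 1) = N by ring]
  rcases lt_or_ge N 0 with hN | hN
  · rw [PowerSeries.coeff_coe, PowerSeries.coeff_coe, if_pos hN, if_pos hN]
  · lift N to ℕ using hN
    rw [LaurentSeries.coeff_coe_powerSeries, LaurentSeries.coeff_coe_powerSeries, ← mul_assoc,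
      coeff_subst_X_mul_unit_mul_zpow_mul_derivative]

end Field

end PowerSeries

open PowerSeries

theorem lagrange_inversion_second_form_general {K : Type*} [Field K] [CharZero K]
    (f F : PowerSeries K)
    (hf0 : PowerSeries.coeff 0 f = 0) (hf1 : PowerSeries.coeff 1 f ≠ 0)
    (hF0 : PowerSeries.coeff 0 F = 0)
    (hFf : pcomp F f = PowerSeries.X)
    (m : ℕ) (h : PowerSeries K) (n : ℤ) :
    HahnSeries.coeff
        ((HahnSeries.ofPowerSeries ℤ K F) ^ (-(m : ℤ))
          * HahnSeries.ofPowerSeries ℤ K (pcomp h F)) n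
      = HahnSeries.coeff
          ((HahnSeries.ofPowerSeries ℤ K (PowerSeries.X : PowerSeries K)) ^ (-(m : ℤ))
            * HahnSeries.ofPowerSeries ℤ K h
            * (HahnSeries.ofPowerSeries ℤ K f) ^ (-n - 1)
            * HahnSeries.ofPowerSeries ℤ K (pderiv f)) (-1) := by
  have hF1 : coeff 1 F ≠ 0 := by
    have h1 := congr_arg (coeff 1) hFf
    rw [coeff_one_pcomp hF0, coeff_X, if_pos rfl] at h1
    exact left_ne_zero_of_mul_eq_one h1
  obtain ⟨u, rfl⟩ := exists_eq_X_mul_unit hf0 (isUnit_iff_ne_zero.mpr hf1)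
  obtain ⟨v, rfl⟩ := exists_eq_X_mul_unit hF0 (isUnit_iff_ne_zero.mpr hF1)
  have hu : HasSubst (X * (u : K⟦X⟧)) := HasSubst.of_constantCoeff_zero' (by simp)
  have hv : HasSubst (X * (v : K⟦X⟧)) := HasSubst.of_constantCoeff_zero' (by simp)
  rw [pcomp_eq_subst _ (by simp)] at hFf
  rw [pcomp_eq_subst _ (by simp), pderiv_eq_derivative]
  set w : K⟦X⟧ := ((v⁻¹ : K⟦X⟧ˣ) : K⟦X⟧) ^ m * h.subst (X * (v : K⟦X⟧))
  have hw : w.subst (X * (u : K⟦X⟧)) = (u : K⟦X⟧) ^ m * h := by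
    rw [subst_mul hu, subst_pow hu, subst_unit_inv_eq_of_subst_X_mul_unit_eq_X hFf,
      subst_comp_subst_apply hv hu, hFf, X_subst]
  rw [← coe_X_mul_unit_zpow_neg_add, show -(m : ℤ) + (-n - 1) = -(n + m) - 1 by ring, ← hw,
    coeff_coe_subst_mul_zpow_mul_derivative, coe_X_mul_unit_zpow, mul_assoc, ← coe_mul,
    HahnSeries.coeff_single_mul, one_mul, sub_neg_eq_add, zpow_neg, zpow_natCast, ← inv_pow,
    Units.val_pow_eq_pow_val]

/-- The second form of the Lagrange inversion formula.  Let `f` be a power series with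
`f(0) = 0` and `f'(0) ≠ 0`, let `F` be its compositional inverse, and let
`g(z) = z^{-m} h(z)` be a Laurent series with only finitely many negative-power terms
(`h` a power series, `m : ℕ`).  Then for every integer `n`, the coefficient of `z^n` in
`g(F(z)) = F(z)^{-m}·h(F(z))` equals the coefficient of `z^{-1}` in
`g(z)·f(z)^{-n-1}·f'(z)`, all read in the field of formal Laurent series. -/
theorem lagrange_inversion_second_form {K : Type*} [Field K] [CharZero K]
    (f F : PowerSeries K)
    (hf0 : PowerSeries.coeff 0 f = 0) (hf1 : PowerSeries.coeff 1 f ≠ 0)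
    (hF0 : PowerSeries.coeff 0 F = 0)
    (hfF : pcomp f F = PowerSeries.X) (hFf : pcomp F f = PowerSeries.X)
    (m : ℕ) (h : PowerSeries K) (n : ℤ) :
    HahnSeries.coeff
        ((HahnSeries.ofPowerSeries ℤ K F) ^ (-(m : ℤ))
          * HahnSeries.ofPowerSeries ℤ K (pcomp h F)) n
      = HahnSeries.coeff
          ((HahnSeries.ofPowerSeries ℤ K (PowerSeries.X : PowerSeries K)) ^ (-(m : ℤ))
            * HahnSeries.ofPowerSeries ℤ K h
            * (HahnSeries.ofPowerSeries ℤ K f) ^ (-n - 1)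
            * HahnSeries.ofPowerSeries ℤ K (pderiv f)) (-1) :=
  lagrange_inversion_second_form_general f F hf0 hf1 hF0 hFf m h n
end

section
/- In the ring of formal power series, let C(z) satisfy C(z) = 1 + 2z C(z) + z² C(z)². Then for positive integers n ≥ 2 and t ≥ 1, the residue (coefficient of z^{-1}) of (z/(1+z+z²))^t · (1+z)^{2n-3}(1-z)/z^n equals C(n-2, n-t-1); equivalently, under the substitution v = z/(1+z+z²), this residue transforms into the coefficient of v^{n-t-1} in (1+v)^{n-2}. -/
/-!
Put `w = 1 + z + z²` and `v = z / w`, so that `dv/dz = (1 - z²) / w²` and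
`(1 + z)² = w (1 + v)`. The integrand is then `(1 + v)^(n-2) v^(t-n) dv/dz`, and after
expanding `(1 + v)^(n-2)` the claim reduces to `Res (v^k dv/dz) = δ_{k,-1}`. For `k ≥ 0` the
series `v^k dv/dz` has no pole; for `k = -1` the residue is the constant term `1` of
`(1 - z²)/w`; for `k = -s-2 ≤ -2` it is `[z^(s+1)] w^s - [z^(s-1)] w^s`, which vanishes because
`w^s` is a palindrome of degree `2s`.
-/

namespace HahnSeries

variable {Γ R : Type*} [AddCommGroup Γ] [LinearOrder Γ] [IsOrderedAddMonoid Γ] [Field R]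

theorem order_inv (x : R⟦Γ⟧) : x⁻¹.order = -x.order := by
  obtain rfl | hx := eq_or_ne x 0
  · simp
  have h := order_mul (inv_ne_zero hx) hx
  rw [inv_mul_cancel₀ hx, order_one] at h
  exact eq_neg_of_add_eq_zero_left h.symm

theorem order_zpow (x : R⟦Γ⟧) (e : ℤ) : (x ^ e).order = e • x.order := by
  obtain ⟨k, rfl | rfl⟩ := e.eq_nat_or_neg
  · simp
  · rw [zpow_neg, order_inv, zpow_natCast, order_pow, neg_smul, natCast_zsmul]

end HahnSeries

theorem zchoose_natCast_eq_sum (m : ℕ) (b : ℤ) :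
    zchoose m b =
      ∑ i ∈ Finset.range (m + 1), if (i : ℤ) = b then (m.choose i : ℤ) else 0 := by
  by_cases hb : 0 ≤ b ∧ b ≤ m
  · obtain ⟨k, rfl⟩ := Int.eq_ofNat_of_zero_le hb.1
    have hk : k < m + 1 := by omega
    simp [zchoose, hb, hk]
  · rw [zchoose, if_neg hb]
    refine (Finset.sum_eq_zero fun i hi => if_neg ?_).symm
    rw [Finset.mem_range] at hi
    omega

namespace ResidueSubstitution

open HahnSeries

variable {K : Type*} [Field K]

local notation "z" => (single (1 : ℤ) (1 : K) : LaurentSeries K)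
local notation "w" => (1 + z + z ^ 2 : LaurentSeries K)
local notation "v" => z / w
-- the derivative `dv/dz`
local notation "dv" => (1 - z ^ 2) / w ^ 2

theorem single_one_sq {R : Type*} [Semiring R] :
    (single (1 : ℤ) (1 : R)) ^ 2 = single 2 1 := by
  simp [single_pow]

theorem coeff_w_mul (x : LaurentSeries K) (a : ℤ) :
    (w * x).coeff a = x.coeff a + x.coeff (a - 1) + x.coeff (a - 2) := by
  simp only [add_mul, one_mul, coeff_add, single_one_sq, coeff_single_mul]

theorem coeff_one_sub_sq_mul (x : LaurentSeries K) (a : ℤ) :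
    ((1 - z ^ 2) * x).coeff a = x.coeff a - x.coeff (a - 2) := by
  simp only [sub_mul, one_mul, coeff_sub, single_one_sq, coeff_single_mul]

theorem coeff_w_pow_symm (s : ℕ) (k : ℤ) : (w ^ s).coeff k = (w ^ s).coeff (2 * s - k) := by
  induction s generalizing k with
  | zero =>
    by_cases hk : k = 0 <;> simp [coeff_one, hk]
  | succ s ih =>
    rw [pow_succ', coeff_w_mul, coeff_w_mul, ih k, ih (k - 1), ih (k - 2)]
    push_cast
    rw [show 2 * (s : ℤ) - (k - 2) = 2 * (s + 1) - k by ring,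
      show 2 * (s : ℤ) - (k - 1) = 2 * (s + 1) - k - 1 by ring,
      show 2 * (s : ℤ) - k = 2 * (s + 1) - k - 2 by ring]
    ring

theorem w_ne_zero : (w) ≠ 0 :=
  ne_zero_of_coeff_ne_zero (g := 0) (by simp)

theorem order_w : (w).order = 0 := by
  refine le_antisymm (order_le_of_coeff_ne_zero (by simp)) ?_
  rw [le_order_iff_forall w_ne_zero]
  intro j hj
  simp [coeff_one, hj.ne, (hj.trans one_pos).ne, (hj.trans two_pos).ne]

theorem coeff_w_zpow_of_neg (e : ℤ) {i : ℤ} (hi : i < 0) : (w ^ e).coeff i = 0 :=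
  coeff_eq_zero_of_lt_order (by rwa [order_zpow, order_w, smul_zero])

theorem coeff_w_inv_zero : (w⁻¹).coeff 0 = 1 := by
  have h := congrArg (coeff · 0) (mul_inv_cancel₀ (w_ne_zero (K := K)))
  rw [← zpow_neg_one] at h ⊢
  simp only [coeff_w_mul] at h
  rwa [coeff_w_zpow_of_neg _ (by norm_num : (0 : ℤ) - 1 < 0),
    coeff_w_zpow_of_neg _ (by norm_num : (0 : ℤ) - 2 < 0), add_zero, add_zero, coeff_one,
    if_pos rfl] at h

theorem v_zpow_mul_dv (k : ℤ) : v ^ k * dv = single k 1 * ((1 - z ^ 2) * w ^ (-k - 2)) := by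
  rw [div_zpow, ← RatFunc.single_zpow, show -k - 2 = -(k + (2 : ℕ)) by push_cast; ring,
    zpow_neg, zpow_add₀ w_ne_zero, zpow_natCast, mul_inv]
  ring

theorem coeff_v_zpow_mul_dv (k : ℤ) : (v ^ k * dv).coeff (-1) = if k = -1 then 1 else 0 := by
  rw [v_zpow_mul_dv, coeff_single_mul, one_mul, coeff_one_sub_sq_mul]
  rcases lt_trichotomy k (-1) with hk | rfl | hk
  · obtain ⟨s, hs⟩ : ∃ s : ℕ, -k - 2 = s := ⟨(-k - 2).toNat, by omega⟩
    rw [hs, zpow_natCast, coeff_w_pow_symm s (-1 - k), if_neg hk.ne, sub_eq_zero]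
    congr 1
    omega
  · rw [if_pos rfl, show -(-1 : ℤ) - 2 = -1 by norm_num, show (-1 : ℤ) - -1 = 0 by norm_num,
      coeff_w_zpow_of_neg _ (by norm_num : (0 : ℤ) - 2 < 0), sub_zero, zpow_neg_one,
      coeff_w_inv_zero]
  · rw [coeff_w_zpow_of_neg _ (by omega), coeff_w_zpow_of_neg _ (by omega), if_neg hk.ne',
      sub_zero]

theorem integrand_eq_one_add_v_pow_mul_v_zpow_mul_dv (m t : ℕ) :
    v ^ t * (1 + z) ^ (2 * m + 1) * (1 - z) / z ^ (m + 2)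
      = (1 + v) ^ m * v ^ ((t : ℤ) - (m + 2 : ℕ)) * dv := by
  have hz : (z) ≠ 0 := single_ne_zero one_ne_zero
  have hw : (w) ≠ 0 := w_ne_zero
  have hsq : (1 + z) ^ 2 = w * (1 + v) := by
    field_simp
    ring
  rw [zpow_sub₀ (div_ne_zero hz hw), zpow_natCast, zpow_natCast, pow_succ (1 + z) (2 * m),
    pow_mul, hsq, mul_pow]
  -- `field_simp` needs `w` and `1 + v` as atoms, not as the sums they are
  generalize 1 + v = u
  generalize (w) = W at hw ⊢
  rw [div_pow _ W (m + 2)]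
  field_simp
  ring

theorem coeff_one_add_v_pow_mul_v_zpow_mul_dv (m : ℕ) (e : ℤ) :
    ((1 + v) ^ m * v ^ e * dv).coeff (-1) = (zchoose m (-1 - e) : K) := by
  have hv : v ≠ 0 := div_ne_zero (single_ne_zero one_ne_zero) w_ne_zero
  rw [add_comm, add_pow]
  simp only [one_pow, mul_one, Finset.sum_mul, coeff_sum]
  rw [zchoose_natCast_eq_sum, Int.cast_sum]
  refine Finset.sum_congr rfl fun i _ => ?_
  rw [show v ^ i * (m.choose i : LaurentSeries K) * v ^ e * dv
      = m.choose i • (v ^ ((i : ℤ) + e) * dv) by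
    rw [nsmul_eq_mul, zpow_add₀ hv, zpow_natCast]; ring]
  rw [coeff_nsmul, Pi.smul_apply, coeff_v_zpow_mul_dv]
  by_cases h : (i : ℤ) = -1 - e
  · rw [if_pos (by omega), if_pos h]; simp
  · rw [if_neg (by omega), if_neg h]; simp

end ResidueSubstitution

open PowerSeries in
theorem residue_substitution_general (n t : ℕ) (hn : 2 ≤ n) :
    HahnSeries.coeff
        (((HahnSeries.single (1 : ℤ) (1 : ℚ))
            / (1 + HahnSeries.single (1 : ℤ) (1 : ℚ)
              + (HahnSeries.single (1 : ℤ) (1 : ℚ)) ^ 2)) ^ t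
          * (1 + HahnSeries.single (1 : ℤ) (1 : ℚ)) ^ (2 * n - 3)
          * (1 - HahnSeries.single (1 : ℤ) (1 : ℚ))
          / (HahnSeries.single (1 : ℤ) (1 : ℚ)) ^ n) (-1)
      = ((zchoose ((n : ℤ) - 2) ((n : ℤ) - t - 1) : ℤ) : ℚ) := by
  obtain ⟨m, rfl⟩ : ∃ m, n = m + 2 := ⟨n - 2, by omega⟩
  rw [show 2 * (m + 2) - 3 = 2 * m + 1 by omega,
    ResidueSubstitution.integrand_eq_one_add_v_pow_mul_v_zpow_mul_dv,
    ResidueSubstitution.coeff_one_add_v_pow_mul_v_zpow_mul_dv]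
  congr 2 <;> omega

open PowerSeries in
/-- Let `C(z)` satisfy `C = 1 + 2zC + z²C²`.  For integers `n ≥ 2` and `t ≥ 1`, the
residue (coefficient of `z^{-1}`) of `(z/(1+z+z²))^t·(1+z)^{2n-3}(1-z)/z^n`, read in
the field of formal Laurent series over `ℚ`, equals `C(n-2,n-t-1)`, i.e. the
coefficient of `v^{n-t-1}` in `(1+v)^{n-2}`. -/
theorem residue_substitution (C : PowerSeries ℚ)
    (hC : C = 1 + 2 * X * C + X ^ 2 * C ^ 2) (n t : ℕ) (hn : 2 ≤ n) (ht : 1 ≤ t) :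
    HahnSeries.coeff
        (((HahnSeries.single (1 : ℤ) (1 : ℚ))
            / (1 + HahnSeries.single (1 : ℤ) (1 : ℚ)
              + (HahnSeries.single (1 : ℤ) (1 : ℚ)) ^ 2)) ^ t
          * (1 + HahnSeries.single (1 : ℤ) (1 : ℚ)) ^ (2 * n - 3)
          * (1 - HahnSeries.single (1 : ℤ) (1 : ℚ))
          / (HahnSeries.single (1 : ℤ) (1 : ℚ)) ^ n) (-1)
      = ((zchoose ((n : ℤ) - 2) ((n : ℤ) - t - 1) : ℤ) : ℚ) :=
  residue_substitution_general n t hn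
end
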